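/- arXiv:1508.00020 — 3 statements merged into one kernel-verified Lean document; each statement's English description precedes it below -/
import Mathlib

section
/- Let p ≥ 2, h ≥ 1, M > 0. Define λ(x,ξ) = M · ω(ξ/h) · (∫₀ˣ ⟨y⟩^{−1} ψ(⟨y⟩/⟨ξ⟩_h^(p−1)) dy), with ω, ψ as in the context. Then |λ(x,ξ)| ≤ M·log 2 + M·(p−1)·log⟨ξ⟩_h for all x, ξ ∈ ℝ. -/
open Real intervalIntegral

lemma cont_inv_sqrt : Continuous fun y : ℝ => (Real.sqrt (1 + y ^ 2))⁻¹ := by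
  apply Continuous.inv₀
  · exact Real.continuous_sqrt.comp (by continuity)
  · intro y
    exact (Real.sqrt_pos.mpr (by positivity)).ne'

lemma integral_inv_sqrt (c : ℝ) :
    ∫ y in (0:ℝ)..c, (Real.sqrt (1 + y ^ 2))⁻¹ = Real.arsinh c := by
  have := intervalIntegral.integral_eq_sub_of_hasDerivAt
    (f := Real.arsinh) (f' := fun y => (Real.sqrt (1 + y ^ 2))⁻¹)
    (a := (0:ℝ)) (b := c)
    (fun y _ => Real.hasDerivAt_arsinh y)
    (cont_inv_sqrt.intervalIntegrable _ _)
  simpa using this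

lemma core_bound (ψ : ℝ → ℝ)
    (hψ01 : ∀ y, 0 ≤ ψ y ∧ ψ y ≤ 1)
    (hψ0 : ∀ y : ℝ, 1 ≤ |y| → ψ y = 0)
    (A : ℝ) (hA1 : 1 ≤ A) (b : ℝ) (hb : 0 ≤ b)
    (hint : IntervalIntegrable
      (fun y => (Real.sqrt (1 + y ^ 2))⁻¹ * ψ (Real.sqrt (1 + y ^ 2) / A))
      MeasureTheory.volume 0 b) :
    ∫ y in (0:ℝ)..b, (Real.sqrt (1 + y ^ 2))⁻¹ * ψ (Real.sqrt (1 + y ^ 2) / A)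
      ≤ Real.log 2 + Real.log A := by
  set f := fun y : ℝ => (Real.sqrt (1 + y ^ 2))⁻¹ * ψ (Real.sqrt (1 + y ^ 2) / A) with hf
  have hA0 : (0:ℝ) < A := by linarith
  set S := Real.sqrt (A ^ 2 - 1) with hS
  have hS0 : 0 ≤ S := Real.sqrt_nonneg _
  have hSsq : S ^ 2 = A ^ 2 - 1 := Real.sq_sqrt (by nlinarith)
  have hSA : Real.sqrt (1 + S ^ 2) = A := by
    rw [hSsq]
    rw [show (1 : ℝ) + (A ^ 2 - 1) = A ^ 2 by ring]
    exact Real.sqrt_sq hA0.le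
  have hSleA : S ≤ A := by
    nlinarith [Real.sq_sqrt (show (0:ℝ) ≤ A^2 - 1 by nlinarith)]
  have hfle : ∀ y : ℝ, f y ≤ (Real.sqrt (1 + y ^ 2))⁻¹ := by
    intro y
    have h1 : (0:ℝ) ≤ (Real.sqrt (1 + y ^ 2))⁻¹ := by positivity
    have := (hψ01 (Real.sqrt (1 + y ^ 2) / A)).2
    calc f y ≤ (Real.sqrt (1 + y ^ 2))⁻¹ * 1 := mul_le_mul_of_nonneg_left this h1
    _ = _ := mul_one _
  have hfzero : ∀ y : ℝ, S ≤ y → f y = 0 := by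
    intro y hy
    have h1 : A ≤ Real.sqrt (1 + y ^ 2) := by
      rw [← hSA]
      apply Real.sqrt_le_sqrt
      nlinarith
    have h2 : (1:ℝ) ≤ |Real.sqrt (1 + y ^ 2) / A| := by
      rw [abs_of_nonneg (by positivity)]
      rw [le_div_iff₀ hA0]
      linarith
    simp [hf, hψ0 _ h2]
  have harsinh : Real.arsinh S ≤ Real.log 2 + Real.log A := by
    rw [Real.arsinh, hSA]
    calc Real.log (S + A) ≤ Real.log (2 * A) :=
          Real.log_le_log (by linarith) (by linarith)
    _ = Real.log 2 + Real.log A := Real.log_mul two_ne_zero hA0.ne'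
  have hmono : ∀ c : ℝ, 0 ≤ c →
      IntervalIntegrable f MeasureTheory.volume 0 c →
      ∫ y in (0:ℝ)..c, f y ≤ Real.arsinh c := by
    intro c hc hci
    calc ∫ y in (0:ℝ)..c, f y
        ≤ ∫ y in (0:ℝ)..c, (Real.sqrt (1 + y ^ 2))⁻¹ :=
          intervalIntegral.integral_mono_on hc hci
            (cont_inv_sqrt.intervalIntegrable _ _) (fun y _ => hfle y)
    _ = Real.arsinh c := integral_inv_sqrt c
  rcases le_or_gt b S with hbS | hbS
  · calc ∫ y in (0:ℝ)..b, f y ≤ Real.arsinh b := hmono b hb hint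
    _ ≤ Real.arsinh S := Real.arsinh_le_arsinh.mpr hbS
    _ ≤ _ := harsinh
  · have hsub1 : IntervalIntegrable f MeasureTheory.volume 0 S :=
      hint.mono_set (by
        rw [Set.uIcc_of_le hS0, Set.uIcc_of_le hb]
        exact Set.Icc_subset_Icc le_rfl hbS.le)
    have hsub2 : IntervalIntegrable f MeasureTheory.volume S b :=
      hint.mono_set (by
        rw [Set.uIcc_of_le hbS.le, Set.uIcc_of_le hb]
        exact Set.Icc_subset_Icc hS0 le_rfl)
    have hzero : ∫ y in S..b, f y = 0 := by
      rw [intervalIntegral.integral_congr (g := fun _ => (0:ℝ))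
        (fun y hy => by
          rw [Set.uIcc_of_le hbS.le] at hy
          exact hfzero y hy.1)]
      simp
    calc ∫ y in (0:ℝ)..b, f y
        = (∫ y in (0:ℝ)..S, f y) + ∫ y in S..b, f y :=
          (intervalIntegral.integral_add_adjacent_intervals hsub1 hsub2).symm
    _ = ∫ y in (0:ℝ)..S, f y := by rw [hzero, add_zero]
    _ ≤ Real.arsinh S := hmono S hS0 hsub1
    _ ≤ _ := harsinh

/-- Logarithmic bound for the top symbol `λ_{p-1}`:
`|λ(x,ξ)| ≤ M log 2 + M (p−1) log ⟨ξ⟩_h`. -/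
theorem lambda_p1_bound
    (p : ℕ) (hp : 2 ≤ p)
    (M h : ℝ) (hM : 0 < M) (hh : 1 ≤ h)
    (ω ψ : ℝ → ℝ) (hωC : ContDiff ℝ (⊤ : ℕ∞) ω)
    (hωb : ∀ y, |ω y| ≤ 1)
    (hψ01 : ∀ y, 0 ≤ ψ y ∧ ψ y ≤ 1)
    (hψ1 : ∀ y : ℝ, |y| ≤ 1 / 2 → ψ y = 1)
    (hψ0 : ∀ y : ℝ, 1 ≤ |y| → ψ y = 0) :
    ∀ x ξ : ℝ,
      |M * ω (ξ / h) *
          (∫ y in (0:ℝ)..x,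
            (Real.sqrt (1 + y ^ 2))⁻¹ *
              ψ (Real.sqrt (1 + y ^ 2) / Real.sqrt (h ^ 2 + ξ ^ 2) ^ ((p : ℝ) - 1)))| ≤
        M * Real.log 2 + M * ((p : ℝ) - 1) * Real.log (Real.sqrt (h ^ 2 + ξ ^ 2)) := by
  intro x ξ
  set T := Real.sqrt (h ^ 2 + ξ ^ 2) with hT
  have hT1 : 1 ≤ T := by
    rw [hT]
    calc (1:ℝ) ≤ h := hh
    _ = Real.sqrt (h ^ 2) := (Real.sqrt_sq (by linarith)).symm
    _ ≤ Real.sqrt (h ^ 2 + ξ ^ 2) := Real.sqrt_le_sqrt (by nlinarith)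
  have hlogT : 0 ≤ Real.log T := Real.log_nonneg hT1
  have hp1 : (1:ℝ) ≤ (p:ℝ) - 1 := by
    have : (2:ℝ) ≤ (p:ℝ) := by exact_mod_cast hp
    linarith
  set A := T ^ ((p:ℝ) - 1) with hA
  have hA1 : (1:ℝ) ≤ A := Real.one_le_rpow hT1 (by linarith)
  have hlogA : Real.log A = ((p:ℝ) - 1) * Real.log T := Real.log_rpow (by linarith) _
  set f := fun y : ℝ => (Real.sqrt (1 + y ^ 2))⁻¹ * ψ (Real.sqrt (1 + y ^ 2) / A) with hf
  have hfnn : ∀ y, 0 ≤ f y := fun y =>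
    mul_nonneg (by positivity) (hψ01 _).1
  have hfeven : (fun y => f (-y)) = f := funext fun y => by simp [hf, neg_sq]
  have hB : 0 ≤ Real.log 2 + ((p:ℝ) - 1) * Real.log T := by
    have := Real.log_nonneg (by norm_num : (1:ℝ) ≤ 2)
    nlinarith
  have key : |∫ y in (0:ℝ)..x, f y| ≤ Real.log 2 + ((p:ℝ) - 1) * Real.log T := by
    by_cases hint : IntervalIntegrable f MeasureTheory.volume 0 x
    · rcases le_or_gt 0 x with hx | hx
      · rw [abs_of_nonneg (intervalIntegral.integral_nonneg hx fun u _ => hfnn u)]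
        rw [← hlogA]
        exact core_bound ψ hψ01 hψ0 A hA1 x hx hint
      · have hint2 : IntervalIntegrable f MeasureTheory.volume 0 (-x) := by
          have := (IntervalIntegrable.iff_comp_neg (by simp)).mp hint
          rw [hfeven] at this
          simpa using this
        have heq : ∫ y in (0:ℝ)..(-x), f y = -∫ y in (0:ℝ)..x, f y := by
          calc ∫ y in (0:ℝ)..(-x), f y = ∫ y in (0:ℝ)..(-x), f (-y) := by rw [hfeven]
          _ = ∫ y in (-(-x))..(-(0:ℝ)), f y := intervalIntegral.integral_comp_neg f
          _ = ∫ y in x..(0:ℝ), f y := by norm_num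
          _ = -∫ y in (0:ℝ)..x, f y := intervalIntegral.integral_symm _ _
        have hnn : 0 ≤ ∫ y in (0:ℝ)..(-x), f y :=
          intervalIntegral.integral_nonneg (by linarith) fun u _ => hfnn u
        have habs : |∫ y in (0:ℝ)..x, f y| = ∫ y in (0:ℝ)..(-x), f y := by
          rw [abs_of_nonpos (by linarith), ← heq]
        rw [habs, ← hlogA]
        exact core_bound ψ hψ01 hψ0 A hA1 (-x) (by linarith) hint2
    · rw [intervalIntegral.integral_undef hint]
      simpa using hB
  calc |M * ω (ξ / h) * ∫ y in (0:ℝ)..x, f y|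
      = M * |ω (ξ / h)| * |∫ y in (0:ℝ)..x, f y| := by
        rw [abs_mul, abs_mul, abs_of_pos hM]
  _ ≤ M * 1 * (Real.log 2 + ((p:ℝ) - 1) * Real.log T) := by
      apply mul_le_mul
      · exact mul_le_mul_of_nonneg_left (hωb _) hM.le
      · exact key
      · exact abs_nonneg _
      · positivity
  _ = M * Real.log 2 + M * ((p:ℝ) - 1) * Real.log T := by ring
end

section
/- Let p ≥ 3, 3 ≤ j ≤ p−1, and let a: [0,T] × ℝ × ℝ → ℂ be continuous in t and smooth in (x,w), satisfying: |Re(D_x^β a)(t,x,w)| ≤ C·γ(w) for 0 ≤ β ≤ j−1, and |(∂_w^q D_x^{β₁} a)(t,x,w)| ≤ C·γ(w) for q ≥ 1, where γ: ℝ → ℝ₊ is continuous. Then for every fixed u ∈ C([0,T]; H^{4p−3}(ℝ)) there exists C′ > 0 such that for 1 ≤ β ≤ j−1, |Re D_x^β(a(t,x,u(t,x)))| ≤ C′·γ(u(t,x))·(1 + ‖u(t,·)‖_{H^{1+β}}^β) for all (t,x) ∈ [0,T] × ℝ. -/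
open MeasureTheory Set Finset

/-- The operator `D_x = (1/i)∂_x` acting on complex-valued functions on `ℝ`. -/
noncomputable def Dx (f : ℝ → ℂ) : ℝ → ℂ := fun x => -Complex.I * deriv f x

/-- Iterated `D_x^n`. -/
noncomputable def DxIter (n : ℕ) (f : ℝ → ℂ) : ℝ → ℂ := Dx^[n] f

/-- Mixed derivative `∂_w^q D_x^{β₁} a` of `a = a(x,w)`. -/
noncomputable def mixedD (q β₁ : ℕ) (a : ℝ → ℝ → ℂ) (x w : ℝ) : ℂ :=
  iteratedDeriv q (fun w' => DxIter β₁ (fun x' => a x' w') x) w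

/-- The `H^n(ℝ)` Sobolev norm of a real-valued function, via `L²` norms of derivatives. -/
noncomputable def hSob (n : ℕ) (v : ℝ → ℝ) : ℝ :=
  (∑ m ∈ Finset.range (n + 1),
    ((eLpNorm (fun x => iteratedDeriv m v x) 2 volume).toReal) ^ 2) ^ (1/2 : ℝ)

noncomputable def pD1 (H : ℝ × ℝ → ℂ) : ℝ × ℝ → ℂ := fun p => fderiv ℝ H p (1, 0)
noncomputable def pD2 (H : ℝ × ℝ → ℂ) : ℝ × ℝ → ℂ := fun p => fderiv ℝ H p (0, 1)

lemma pD1.contDiff {H : ℝ × ℝ → ℂ} (hH : ContDiff ℝ (⊤ : ℕ∞) H) : ContDiff ℝ (⊤ : ℕ∞) (pD1 H) :=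
  (hH.fderiv_right (by simp)).clm_apply contDiff_const

lemma pD2.contDiff {H : ℝ × ℝ → ℂ} (hH : ContDiff ℝ (⊤ : ℕ∞) H) : ContDiff ℝ (⊤ : ℕ∞) (pD2 H) :=
  (hH.fderiv_right (by simp)).clm_apply contDiff_const

lemma hasDerivAt_fst {H : ℝ × ℝ → ℂ} (hH : ContDiff ℝ (⊤ : ℕ∞) H) (x w : ℝ) :
    HasDerivAt (fun x' => H (x', w)) (pD1 H (x, w)) x := by
  have h1 : HasDerivAt (fun x' : ℝ => (x', w)) ((1:ℝ), (0:ℝ)) x :=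
    (hasDerivAt_id x).prodMk (hasDerivAt_const x w)
  exact (hH.differentiable (by simp) (x, w)).hasFDerivAt.comp_hasDerivAt x h1

lemma hasDerivAt_snd {H : ℝ × ℝ → ℂ} (hH : ContDiff ℝ (⊤ : ℕ∞) H) (x w : ℝ) :
    HasDerivAt (fun w' => H (x, w')) (pD2 H (x, w)) w := by
  have h1 : HasDerivAt (fun w' : ℝ => (x, w')) ((0:ℝ), (1:ℝ)) w :=
    (hasDerivAt_const w x).prodMk (hasDerivAt_id w)
  exact (hH.differentiable (by simp) (x, w)).hasFDerivAt.comp_hasDerivAt w h1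

lemma pD_comm {H : ℝ × ℝ → ℂ} (hH : ContDiff ℝ (⊤ : ℕ∞) H) : pD1 (pD2 H) = pD2 (pD1 H) := by
  funext p
  have hdiff : Differentiable ℝ H := hH.differentiable (by simp)
  have hf' : ∀ y, HasFDerivAt H (fderiv ℝ H y) y := fun y => (hdiff y).hasFDerivAt
  have hfd : DifferentiableAt ℝ (fderiv ℝ H) p :=
    (hH.fderiv_right (m := (⊤ : ℕ∞)) (by simp)).differentiable (by simp) p
  have hsymm := second_derivative_symmetric hf' hfd.hasFDerivAt (1,0) (0,1)
  have e1 : pD1 (pD2 H) p = fderiv ℝ (fderiv ℝ H) p (1,0) (0,1) := by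
    show fderiv ℝ (fun p' => fderiv ℝ H p' (0,1)) p (1,0) = _
    rw [fderiv_clm_apply hfd (differentiableAt_const _)]
    simp
  have e2 : pD2 (pD1 H) p = fderiv ℝ (fderiv ℝ H) p (0,1) (1,0) := by
    show fderiv ℝ (fun p' => fderiv ℝ H p' (1,0)) p (0,1) = _
    rw [fderiv_clm_apply hfd (differentiableAt_const _)]
    simp
  rw [e1, e2, hsymm]

lemma pD2_iter_contDiff {H : ℝ × ℝ → ℂ} (hH : ContDiff ℝ (⊤ : ℕ∞) H) (q : ℕ) :
    ContDiff ℝ (⊤ : ℕ∞) (pD2^[q] H) := by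
  induction q generalizing H with
  | zero => exact hH
  | succ q ih => rw [Function.iterate_succ_apply]; exact ih (pD2.contDiff hH)

lemma pD_comm_iter {H : ℝ × ℝ → ℂ} (hH : ContDiff ℝ (⊤ : ℕ∞) H) (q : ℕ) :
    pD1 (pD2^[q] H) = pD2^[q] (pD1 H) := by
  induction q generalizing H with
  | zero => rfl
  | succ q ih =>
    rw [Function.iterate_succ_apply, Function.iterate_succ_apply,
      ih (pD2.contDiff hH), pD_comm hH]

/-- `pR q β₁ H = ∂_w^q ∂_x^{β₁} H`. -/
noncomputable def pR (q β₁ : ℕ) (H : ℝ × ℝ → ℂ) : ℝ × ℝ → ℂ := pD2^[q] (pD1^[β₁] H)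

lemma pD1_iter_contDiff {H : ℝ × ℝ → ℂ} (hH : ContDiff ℝ (⊤ : ℕ∞) H) (q : ℕ) :
    ContDiff ℝ (⊤ : ℕ∞) (pD1^[q] H) := by
  induction q generalizing H with
  | zero => exact hH
  | succ q ih => rw [Function.iterate_succ_apply]; exact ih (pD1.contDiff hH)

lemma pR.contDiff {H : ℝ × ℝ → ℂ} (hH : ContDiff ℝ (⊤ : ℕ∞) H) (q β₁ : ℕ) :
    ContDiff ℝ (⊤ : ℕ∞) (pR q β₁ H) := pD2_iter_contDiff (pD1_iter_contDiff hH β₁) q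

lemma pR_succ_w {H : ℝ × ℝ → ℂ} (q β₁ : ℕ) : pD2 (pR q β₁ H) = pR (q+1) β₁ H := by
  unfold pR; rw [Function.iterate_succ_apply']

lemma pR_succ_x {H : ℝ × ℝ → ℂ} (hH : ContDiff ℝ (⊤ : ℕ∞) H) (q β₁ : ℕ) :
    pD1 (pR q β₁ H) = pR q (β₁+1) H := by
  unfold pR
  rw [pD_comm_iter (pD1_iter_contDiff hH β₁) q, Function.iterate_succ_apply']

lemma iteratedDeriv_fst {H : ℝ × ℝ → ℂ} (hH : ContDiff ℝ (⊤ : ℕ∞) H) (β₁ : ℕ) (x w : ℝ) :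
    iteratedDeriv β₁ (fun x' => H (x', w)) x = pR 0 β₁ H (x, w) := by
  induction β₁ generalizing x with
  | zero => simp [pR]
  | succ β₁ ih =>
    rw [iteratedDeriv_succ]
    have hfun : iteratedDeriv β₁ (fun x'' => H (x'', w))
        = fun x' => pR 0 β₁ H (x', w) := funext fun x' => ih x'
    rw [hfun, (hasDerivAt_fst (pR.contDiff hH 0 β₁) x w).deriv]
    show pD1 (pD1^[β₁] H) (x, w) = _
    rw [← Function.iterate_succ_apply' pD1]
    rfl

lemma iteratedDeriv_snd {H : ℝ × ℝ → ℂ} (hH : ContDiff ℝ (⊤ : ℕ∞) H) (q β₁ : ℕ) (x w : ℝ) :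
    iteratedDeriv q (fun w' => pR 0 β₁ H (x, w')) w = pR q β₁ H (x, w) := by
  induction q generalizing w with
  | zero => simp
  | succ q ih =>
    rw [iteratedDeriv_succ]
    have hfun : iteratedDeriv q (fun w'' => pR 0 β₁ H (x, w''))
        = fun w' => pR q β₁ H (x, w') := funext fun w' => ih w'
    rw [hfun, (hasDerivAt_snd (pR.contDiff hH q β₁) x w).deriv, pR_succ_w]

lemma iteratedDeriv_const_mul' (c : ℂ) (n : ℕ) (f : ℝ → ℂ) :
    iteratedDeriv n (fun y => c * f y) = fun y => c * iteratedDeriv n f y := by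
  induction n with
  | zero => simp
  | succ n ih =>
    funext y
    rw [iteratedDeriv_succ, iteratedDeriv_succ, ih]
    exact deriv_const_mul_field c

lemma DxIter_eq (n : ℕ) (f : ℝ → ℂ) :
    DxIter n f = fun x => (-Complex.I)^n * iteratedDeriv n f x := by
  induction n with
  | zero => simp [DxIter]
  | succ n ih =>
    show Dx^[n+1] f = _
    rw [Function.iterate_succ_apply']
    show Dx (DxIter n f) = _
    rw [ih]
    funext x
    show -Complex.I * deriv (fun x => (-Complex.I)^n * iteratedDeriv n f x) x = _
    rw [deriv_const_mul_field, iteratedDeriv_succ]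
    ring

lemma mixedD_eq_pR {A : ℝ → ℝ → ℂ} (hA : ContDiff ℝ (⊤ : ℕ∞) (fun p : ℝ × ℝ => A p.1 p.2))
    (q β₁ : ℕ) (x w : ℝ) :
    mixedD q β₁ A x w = (-Complex.I)^β₁ * pR q β₁ (fun p => A p.1 p.2) (x, w) := by
  unfold mixedD
  have h1 : (fun w' => DxIter β₁ (fun x' => A x' w') x)
      = fun w' => (-Complex.I)^β₁ * pR 0 β₁ (fun p : ℝ × ℝ => A p.1 p.2) (x, w') := by
    funext w'
    rw [DxIter_eq, ← iteratedDeriv_fst hA β₁ x w']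
  rw [h1, iteratedDeriv_const_mul']
  beta_reduce
  rw [iteratedDeriv_snd hA q β₁]

lemma norm_pR_le {A : ℝ → ℝ → ℂ} (hA : ContDiff ℝ (⊤ : ℕ∞) (fun p : ℝ × ℝ => A p.1 p.2))
    (q β₁ : ℕ) (x w : ℝ) :
    ‖pR q β₁ (fun p => A p.1 p.2) (x, w)‖ = ‖mixedD q β₁ A x w‖ := by
  rw [mixedD_eq_pR hA, norm_mul, norm_pow, norm_neg, Complex.norm_I, one_pow, one_mul]

/-- Complexified product of derivatives of `g` with orders in `rs`. -/
noncomputable def Gp (g : ℝ → ℝ) (rs : List ℕ) (x : ℝ) : ℂ :=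
  (rs.map (fun r => ((iteratedDeriv r g x : ℝ) : ℂ))).prod

/-- Leibniz bump: lists obtained by raising one entry by one. -/
def bump : List ℕ → List (List ℕ)
  | [] => []
  | r :: rs => ((r+1) :: rs) :: (bump rs).map (r :: ·)

lemma bump_sum {rs : List ℕ} {rs' : List ℕ} (h : rs' ∈ bump rs) :
    rs'.sum = rs.sum + 1 := by
  induction rs generalizing rs' with
  | nil => simp [bump] at h
  | cons r rs ih =>
    simp only [bump, List.mem_cons, List.mem_map] at h
    rcases h with rfl | ⟨t, ht, rfl⟩
    · simp [List.sum_cons]; ring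
    · simp [List.sum_cons, ih ht]; ring

lemma bump_pos {rs : List ℕ} (hrs : ∀ r ∈ rs, 1 ≤ r) {rs' : List ℕ} (h : rs' ∈ bump rs) :
    ∀ r ∈ rs', 1 ≤ r := by
  induction rs generalizing rs' with
  | nil => simp [bump] at h
  | cons r rs ih =>
    simp only [bump, List.mem_cons, List.mem_map] at h
    rcases h with rfl | ⟨t, ht, rfl⟩
    · intro s hs
      rcases List.mem_cons.1 hs with rfl | hs
      · omega
      · exact hrs s (List.mem_cons_of_mem _ hs)
    · intro s hs
      rcases List.mem_cons.1 hs with rfl | hs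
      · exact hrs s (List.mem_cons_self)
      · exact ih (fun r hr => hrs r (List.mem_cons_of_mem _ hr)) ht s hs

lemma hasDerivAt_iteratedDerivC {g : ℝ → ℝ} (hg : ContDiff ℝ (⊤ : ℕ∞) g) (r : ℕ) (x : ℝ) :
    HasDerivAt (fun y => ((iteratedDeriv r g y : ℝ) : ℂ))
      ((iteratedDeriv (r+1) g x : ℝ) : ℂ) x := by
  have h1 : HasDerivAt (iteratedDeriv r g) (iteratedDeriv (r+1) g x) x := by
    rw [iteratedDeriv_succ]
    exact ((hg.differentiable_iteratedDeriv r (by exact_mod_cast ENat.coe_lt_top r)).differentiableAt).hasDerivAt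
  exact h1.ofReal_comp

lemma Gp_hasDerivAt {g : ℝ → ℝ} (hg : ContDiff ℝ (⊤ : ℕ∞) g) (rs : List ℕ) (x : ℝ) :
    HasDerivAt (Gp g rs) (((bump rs).map (fun rs' => Gp g rs' x)).sum) x := by
  induction rs with
  | nil =>
    have hG : Gp g [] = fun _ => (1 : ℂ) := by funext y; simp [Gp]
    rw [hG]; simpa [bump] using hasDerivAt_const x (1 : ℂ)
  | cons r rs ih =>
    have hfun : Gp g (r :: rs) =
        fun y => ((iteratedDeriv r g y : ℝ) : ℂ) * Gp g rs y := by
      funext y; simp [Gp]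
    rw [hfun]
    have h := (hasDerivAt_iteratedDerivC hg r x).mul ih
    have hval : ((iteratedDeriv (r+1) g x : ℝ) : ℂ) * Gp g rs x
          + ((iteratedDeriv r g x : ℝ) : ℂ) * ((bump rs).map (fun rs' => Gp g rs' x)).sum
        = ((bump (r :: rs)).map (fun rs' => Gp g rs' x)).sum := by
      simp only [bump, List.map_cons, List.sum_cons, List.map_map, Function.comp_def]
      rw [← List.sum_map_mul_left]
      simp [Gp]
    rwa [hval] at h

lemma hasDerivAt_list_sum {α : Type*} (L : List α) (f : α → ℝ → ℂ) (f' : α → ℂ) (x : ℝ)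
    (h : ∀ e ∈ L, HasDerivAt (f e) (f' e) x) :
    HasDerivAt (fun y => (L.map (f · y)).sum) ((L.map f').sum) x := by
  induction L with
  | nil => simpa using hasDerivAt_const x (0 : ℂ)
  | cons e L ih =>
    have h1 := h e (List.mem_cons_self)
    have h2 := ih (fun e' he' => h e' (List.mem_cons_of_mem _ he'))
    simp only [List.map_cons, List.sum_cons]
    exact h1.add h2

noncomputable def termC (H : ℝ × ℝ → ℂ) (g : ℝ → ℝ) (e : ℕ × ℕ × List ℕ) (x : ℝ) : ℂ :=
  pR e.1 e.2.1 H (x, g x) * Gp g e.2.2 x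

lemma pR_comp_hasDerivAt {H : ℝ × ℝ → ℂ} (hH : ContDiff ℝ (⊤ : ℕ∞) H)
    {g : ℝ → ℝ} (hg : ContDiff ℝ (⊤ : ℕ∞) g) (q β₁ : ℕ) (x : ℝ) :
    HasDerivAt (fun y => pR q β₁ H (y, g y))
      (pR q (β₁+1) H (x, g x) + pR (q+1) β₁ H (x, g x) * ((deriv g x : ℝ) : ℂ)) x := by
  have hφ : HasDerivAt (fun y : ℝ => (y, g y)) ((1:ℝ), deriv g x) x :=
    (hasDerivAt_id x).prodMk ((hg.differentiable (by simp) x).hasDerivAt)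
  have h := (((pR.contDiff hH q β₁).differentiable (by simp) (x, g x)).hasFDerivAt).comp_hasDerivAt
    x hφ
  have hval : fderiv ℝ (pR q β₁ H) (x, g x) ((1:ℝ), deriv g x)
      = pR q (β₁+1) H (x, g x) + pR (q+1) β₁ H (x, g x) * ((deriv g x : ℝ) : ℂ) := by
    have hdec : ((1:ℝ), deriv g x) = ((1:ℝ), (0:ℝ)) + deriv g x • ((0:ℝ), (1:ℝ)) := by
      simp
    rw [hdec, map_add, ContinuousLinearMap.map_smul]
    have e1 : fderiv ℝ (pR q β₁ H) (x, g x) ((1:ℝ), (0:ℝ)) = pR q (β₁+1) H (x, g x) := by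
      rw [← pR_succ_x hH]; rfl
    have e2 : fderiv ℝ (pR q β₁ H) (x, g x) ((0:ℝ), (1:ℝ)) = pR (q+1) β₁ H (x, g x) := by
      rw [← pR_succ_w]; rfl
    rw [e1, e2, Complex.real_smul]
    ring
  rwa [hval] at h

def derivedList (e : ℕ × ℕ × List ℕ) : List (ℕ × ℕ × List ℕ) :=
  (e.1, e.2.1 + 1, e.2.2) :: (e.1 + 1, e.2.1, 1 :: e.2.2)
    :: (bump e.2.2).map (fun rs' => (e.1, e.2.1, rs'))

lemma termC_hasDerivAt {H : ℝ × ℝ → ℂ} (hH : ContDiff ℝ (⊤ : ℕ∞) H)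
    {g : ℝ → ℝ} (hg : ContDiff ℝ (⊤ : ℕ∞) g) (e : ℕ × ℕ × List ℕ) (x : ℝ) :
    HasDerivAt (fun y => termC H g e y)
      (((derivedList e).map (fun e' => termC H g e' x)).sum) x := by
  obtain ⟨q, β₁, rs⟩ := e
  have h := (pR_comp_hasDerivAt hH hg q β₁ x).mul (Gp_hasDerivAt hg rs x)
  have hval : (pR q (β₁+1) H (x, g x) + pR (q+1) β₁ H (x, g x) * ((deriv g x : ℝ) : ℂ))
        * Gp g rs x + pR q β₁ H (x, g x) * ((bump rs).map (fun rs' => Gp g rs' x)).sum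
      = ((derivedList (q, β₁, rs)).map (fun e' => termC H g e' x)).sum := by
    simp only [derivedList, List.map_cons, List.sum_cons, List.map_map, Function.comp_def,
      termC]
    rw [← List.sum_map_mul_left]
    have hGp1 : Gp g (1 :: rs) x = ((deriv g x : ℝ) : ℂ) * Gp g rs x := by
      simp [Gp, iteratedDeriv_one]
    rw [hGp1]
    ring
  rwa [hval] at h

lemma sum_map_flatMap {α β' : Type*} (L : List α) (f : β' → ℂ) (d : α → List β') :
    ((L.flatMap d).map f).sum = (L.map (fun e => ((d e).map f).sum)).sum := by
  induction L with
  | nil => simp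
  | cons e L ihL => simp [List.flatMap_cons, ihL]

/-- The explicit Faà di Bruno term list, depending only on `β`. -/
def reprList : ℕ → List (ℕ × ℕ × List ℕ)
  | 0 => []
  | β + 1 => (1, β, [1]) :: (reprList β).flatMap derivedList

lemma reprList_inv (β : ℕ) :
    ∀ e ∈ reprList β, 1 ≤ e.1 ∧ e.2.1 + e.2.2.sum = β ∧ ∀ r ∈ e.2.2, 1 ≤ r := by
  induction β with
  | zero => simp [reprList]
  | succ β hinv =>
    intro e he
    rw [reprList] at he
    rcases List.mem_cons.1 he with rfl | he
    · refine ⟨le_refl 1, by simp, by simp⟩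
    · rw [List.mem_flatMap] at he
      obtain ⟨e₀, he₀, hmem⟩ := he
      obtain ⟨hq, hsum, hpos⟩ := hinv e₀ he₀
      obtain ⟨q, β₁, rs⟩ := e₀
      simp only [derivedList, List.mem_cons, List.mem_map] at hmem
      rcases hmem with rfl | rfl | ⟨rs', hrs', rfl⟩
      · exact ⟨hq, by simp at hsum ⊢; omega, hpos⟩
      · refine ⟨by omega, by simp at hsum ⊢; omega, ?_⟩
        intro r hr
        rcases List.mem_cons.1 hr with rfl | hr
        · exact le_refl 1
        · exact hpos r hr
      · refine ⟨hq, ?_, bump_pos hpos hrs'⟩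
        have := bump_sum hrs'
        simp at hsum ⊢
        omega

lemma repr_lemma {H : ℝ × ℝ → ℂ} (hH : ContDiff ℝ (⊤ : ℕ∞) H)
    {g : ℝ → ℝ} (hg : ContDiff ℝ (⊤ : ℕ∞) g) (β : ℕ) :
    ∀ x, iteratedDeriv β (fun x' => H (x', g x')) x
        = pR 0 β H (x, g x) + ((reprList β).map (fun e => termC H g e x)).sum := by
  induction β with
  | zero =>
    intro x
    simp [pR, reprList]
  | succ β hid =>
    intro x
    rw [iteratedDeriv_succ]
    have hfun : iteratedDeriv β (fun x' => H (x', g x'))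
        = fun y => pR 0 β H (y, g y) + ((reprList β).map (fun e => termC H g e y)).sum :=
      funext hid
    rw [hfun]
    have hmain := pR_comp_hasDerivAt hH hg 0 β x
    have hsum := hasDerivAt_list_sum (reprList β) (fun e y => termC H g e y)
      (fun e => ((derivedList e).map (fun e' => termC H g e' x)).sum) x
      (fun e _ => termC_hasDerivAt hH hg e x)
    have h : deriv (fun y => pR 0 β H (y, g y) + ((reprList β).map (fun e => termC H g e y)).sum) x = _ :=
      (hmain.add hsum).deriv
    rw [h]
    have hflat : (((reprList β).flatMap derivedList).map (fun e => termC H g e x)).sum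
        = ((reprList β).map (fun e => ((derivedList e).map (fun e' => termC H g e' x)).sum)).sum :=
      sum_map_flatMap (reprList β) _ derivedList
    have hterm1 : pR 1 β H (x, g x) * ((deriv g x : ℝ) : ℂ) = termC H g (1, β, [1]) x := by
      simp [termC, Gp, iteratedDeriv_one]
    rw [reprList]
    simp only [List.map_cons, List.sum_cons, hflat, hterm1]
    ring

lemma toReal_eLpNorm_two_sq {v : ℝ → ℝ} (h : MemLp v 2 volume) :
    (eLpNorm v 2 volume).toReal ^ 2 = ∫ y, v y ^ 2 := by
  rw [h.eLpNorm_eq_integral_rpow_norm (by norm_num) (by norm_num),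
    ENNReal.toReal_ofReal (by positivity)]
  have h2 : (2 : ENNReal).toReal = 2 := by norm_num
  rw [h2]
  have hnn : 0 ≤ ∫ a, ‖v a‖ ^ (2:ℝ) := by positivity
  rw [← Real.rpow_natCast ((∫ a, ‖v a‖ ^ (2:ℝ)) ^ (2:ℝ)⁻¹) 2, ← Real.rpow_mul hnn]
  norm_num

lemma sobolev_pointwise {v : ℝ → ℝ} (hv : Differentiable ℝ v)
    (hcv' : Continuous (deriv v))
    (h2 : MemLp v 2 volume) (h2' : MemLp (deriv v) 2 volume) (x : ℝ) :
    v x ^ 2 ≤ (eLpNorm v 2 volume).toReal ^ 2 + (eLpNorm (deriv v) 2 volume).toReal ^ 2 := by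
  set h : ℝ → ℝ := fun y => 2 * v y * deriv v y with hh
  have hcv : Continuous v := hv.continuous
  have hsq : Integrable (fun y => v y ^ 2) volume := h2.integrable_sq
  have hsq' : Integrable (fun y => deriv v y ^ 2) volume := h2'.integrable_sq
  have hbound : ∀ y, |h y| ≤ v y ^ 2 + deriv v y ^ 2 := by
    intro y
    have := two_mul_le_add_sq |v y| |deriv v y|
    calc |h y| = 2 * |v y| * |deriv v y| := by
          rw [hh]; simp [abs_mul, mul_assoc]
      _ ≤ |v y| ^ 2 + |deriv v y| ^ 2 := by nlinarith [this]
      _ = v y ^ 2 + deriv v y ^ 2 := by rw [sq_abs, sq_abs]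
  have hint : Integrable h volume := by
    refine Integrable.mono' (hsq.add hsq') (((continuous_const.mul hcv).mul hcv').aestronglyMeasurable)
      (Filter.Eventually.of_forall fun y => ?_)
    simpa [Real.norm_eq_abs] using hbound y
  -- FTC
  have hftc : ∀ y : ℝ, ∫ t in x..y, h t = v y ^ 2 - v x ^ 2 := by
    intro y
    refine intervalIntegral.integral_eq_sub_of_hasDerivAt (f := fun t => v t ^ 2) (fun t _ => ?_)
      hint.intervalIntegrable
    have hd : HasDerivAt v (deriv v t) t := (hv t).hasDerivAt
    have := hd.pow 2
    refine this.congr_deriv ?_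
    show _ = (2:ℝ) * v t * deriv v t
    norm_num
  have htend : Filter.Tendsto (fun y => v y ^ 2) Filter.atTop
      (nhds (v x ^ 2 + ∫ t in Ioi x, h t)) := by
    have h1 := intervalIntegral_tendsto_integral_Ioi x hint.integrableOn Filter.tendsto_id
    have : (fun y => v y ^ 2) = fun y => (∫ t in x..y, h t) + v x ^ 2 := by
      funext y; rw [hftc y]; ring
    rw [this]
    simpa [add_comm] using h1.add_const (v x ^ 2)
  set L := v x ^ 2 + ∫ t in Ioi x, h t with hL
  have hLnn : 0 ≤ L := ge_of_tendsto htend (Filter.Eventually.of_forall fun y => sq_nonneg _)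
  have hLle : L ≤ 0 := by
    by_contra hpos
    push_neg at hpos
    have hev : ∀ᶠ y in Filter.atTop, L / 2 < v y ^ 2 :=
      htend.eventually (eventually_gt_nhds (by linarith))
    obtain ⟨R, hR⟩ := Filter.eventually_atTop.1 hev
    have hsub : Ici R ⊆ {y | L / 2 ≤ v y ^ 2} := fun y hy => (hR y hy).le
    have hfin := hsq.measure_ge_lt_top (by linarith : (0:ℝ) < L / 2)
    have : (volume (Ici R) : ENNReal) ≤ volume {y | L / 2 ≤ v y ^ 2} := measure_mono hsub
    rw [Real.volume_Ici] at this
    exact absurd (lt_of_le_of_lt this hfin) (by simp)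
  have hL0 : L = 0 := le_antisymm hLle hLnn
  have hvx : v x ^ 2 = - ∫ t in Ioi x, h t := by
    have : v x ^ 2 + ∫ t in Ioi x, h t = 0 := hL0
    linarith
  calc v x ^ 2 = - ∫ t in Ioi x, h t := hvx
    _ ≤ |∫ t in Ioi x, h t| := neg_le_abs _
    _ ≤ ∫ t in Ioi x, |h t| := by
        simpa [Real.norm_eq_abs] using
          norm_integral_le_integral_norm (μ := volume.restrict (Ioi x)) h
    _ ≤ ∫ t, |h t| := by
        refine setIntegral_le_integral hint.abs (Filter.Eventually.of_forall fun y => ?_)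
        exact abs_nonneg _
    _ ≤ ∫ t, (v t ^ 2 + deriv v t ^ 2) := by
        refine integral_mono hint.abs (hsq.add hsq') hbound
    _ = (∫ t, v t ^ 2) + ∫ t, deriv v t ^ 2 := integral_add hsq hsq'
    _ = (eLpNorm v 2 volume).toReal ^ 2 + (eLpNorm (deriv v) 2 volume).toReal ^ 2 := by
        rw [toReal_eLpNorm_two_sq h2, toReal_eLpNorm_two_sq h2']

lemma mem_le_listSum {r : ℕ} {rs : List ℕ} (h : r ∈ rs) : r ≤ rs.sum := by
  induction rs with
  | nil => simp at h
  | cons s rs ih =>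
    rcases List.mem_cons.1 h with rfl | h
    · simp [List.sum_cons]
    · have := ih h; simp [List.sum_cons]; omega

lemma length_le_listSum {rs : List ℕ} (h : ∀ r ∈ rs, 1 ≤ r) : rs.length ≤ rs.sum := by
  induction rs with
  | nil => simp
  | cons s rs ih =>
    have h1 := h s (List.mem_cons_self)
    have := ih (fun r hr => h r (List.mem_cons_of_mem _ hr))
    simp [List.sum_cons]
    omega

lemma Gp_norm_le {g : ℝ → ℝ} {rs : List ℕ} {x : ℝ} {M : ℝ} (hM : 1 ≤ M)
    (h : ∀ r ∈ rs, |iteratedDeriv r g x| ≤ M) : ‖Gp g rs x‖ ≤ M ^ rs.length := by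
  induction rs with
  | nil => simp [Gp]
  | cons r rs ih =>
    have h1 := h r (List.mem_cons_self)
    have h2 := ih (fun s hs => h s (List.mem_cons_of_mem _ hs))
    have hGp : Gp g (r :: rs) x = ((iteratedDeriv r g x : ℝ) : ℂ) * Gp g rs x := by simp [Gp]
    rw [hGp, List.length_cons, pow_succ, norm_mul]
    have hnr : ‖((iteratedDeriv r g x : ℝ) : ℂ)‖ = |iteratedDeriv r g x| := by
      simp [Real.norm_eq_abs]
    rw [hnr]
    have hnn : (0:ℝ) ≤ ‖Gp g rs x‖ := norm_nonneg _
    calc |iteratedDeriv r g x| * ‖Gp g rs x‖ ≤ M * M ^ rs.length := by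
          apply mul_le_mul h1 h2 hnn (by linarith)
      _ = M ^ rs.length * M := by ring

lemma norm_listSum_le {α : Type*} (L : List α) (f : α → ℂ) (K : ℝ) (hK : 0 ≤ K)
    (h : ∀ e ∈ L, ‖f e‖ ≤ K) : ‖(L.map f).sum‖ ≤ L.length * K := by
  induction L with
  | nil => simp
  | cons e L ih =>
    have h1 := h e (List.mem_cons_self)
    have h2 := ih (fun e' he' => h e' (List.mem_cons_of_mem _ he'))
    simp only [List.map_cons, List.sum_cons, List.length_cons]
    calc ‖f e + (L.map f).sum‖ ≤ ‖f e‖ + ‖(L.map f).sum‖ := norm_add_le _ _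
      _ ≤ K + L.length * K := add_le_add h1 h2
      _ = (L.length + 1) * K := by ring
      _ = ((L.length + 1 : ℕ) : ℝ) * K := by push_cast; ring

/-- Lemma 2.2, formula (2.13): estimate of the real part of spatial derivatives of the
composed coefficient `a_j(t,x,u(t,x))`. -/
theorem real_part_composed_estimate
    (p j : ℕ) (hp : 3 ≤ p) (hj3 : 3 ≤ j) (hjp : j ≤ p - 1)
    (T : ℝ) (hT : 0 < T)
    (a : ℝ → ℝ → ℝ → ℂ) (C : ℝ) (hC : 0 < C) (γ : ℝ → ℝ) (hγ : Continuous γ)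
    (hγpos : ∀ w, 0 < γ w)
    (haC : Continuous fun q : ℝ × ℝ × ℝ => a q.1 q.2.1 q.2.2)
    (haS : ∀ t, ContDiff ℝ (⊤ : ℕ∞) (fun q : ℝ × ℝ => a t q.1 q.2))
    (hRe : ∀ β ≤ j - 1, ∀ t ∈ Icc (0:ℝ) T, ∀ x w : ℝ,
      |(DxIter β (fun x' => a t x' w) x).re| ≤ C * γ w)
    (hmix : ∀ q β₁ : ℕ, 1 ≤ q → ∀ t ∈ Icc (0:ℝ) T, ∀ x w : ℝ,
      ‖mixedD q β₁ (fun x' w' => a t x' w') x w‖ ≤ C * γ w)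
    (u : ℝ → ℝ → ℝ)
    (huC : Continuous fun q : ℝ × ℝ => u q.1 q.2)
    (huS : ∀ t, ContDiff ℝ (⊤ : ℕ∞) (u t))
    (huH : ∀ t ∈ Icc (0:ℝ) T, ∀ m ≤ 4 * p - 3,
      MemLp (fun x => iteratedDeriv m (u t) x) 2 volume) :
    ∃ C' > 0, ∀ β : ℕ, 1 ≤ β → β ≤ j - 1 → ∀ t ∈ Icc (0:ℝ) T, ∀ x : ℝ,
      |(DxIter β (fun x' => a t x' (u t x')) x).re| ≤
        C' * γ (u t x) * (1 + hSob (1 + β) (u t) ^ β) := by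
  have key : ∀ β : ℕ, ∃ Cb : ℝ, 0 < Cb ∧ (1 ≤ β → β ≤ j - 1 →
      ∀ t ∈ Icc (0:ℝ) T, ∀ x : ℝ,
      |(DxIter β (fun x' => a t x' (u t x')) x).re| ≤
        Cb * γ (u t x) * (1 + hSob (1 + β) (u t) ^ β)) := by
    intro β
    refine ⟨C * (1 + (reprList β).length), by positivity, ?_⟩
    intro hβ1 hβj t ht x
    have hHs : ContDiff ℝ (⊤ : ℕ∞) (fun p : ℝ × ℝ => a t p.1 p.2) := haS t
    have hg : ContDiff ℝ (⊤ : ℕ∞) (u t) := huS t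
    set g : ℝ → ℝ := u t with hgdef
    set H : ℝ × ℝ → ℂ := fun p : ℝ × ℝ => a t p.1 p.2 with hHdef
    set S : ℝ := hSob (1 + β) g with hSdef
    have hSnn : 0 ≤ S := Real.rpow_nonneg (by positivity) _
    have hSsq : S ^ 2 = ∑ m ∈ Finset.range (1 + β + 1),
        ((eLpNorm (fun y => iteratedDeriv m g y) 2 volume).toReal) ^ 2 := by
      rw [hSdef]
      unfold hSob
      have hnn : (0:ℝ) ≤ ∑ m ∈ Finset.range (1 + β + 1),
          ((eLpNorm (fun y => iteratedDeriv m g y) 2 volume).toReal) ^ 2 := by positivity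
      rw [← Real.rpow_natCast (_ ^ (1/2:ℝ)) 2, ← Real.rpow_mul hnn]
      norm_num
    -- pointwise derivative bounds
    have hder : ∀ r ≤ β, ∀ y : ℝ, |iteratedDeriv r g y| ≤ S := by
      intro r hr y
      have hm1 : r ≤ 4 * p - 3 := by omega
      have hm2 : r + 1 ≤ 4 * p - 3 := by omega
      have h2 : MemLp (fun y => iteratedDeriv r g y) 2 volume := huH t ht r hm1
      have h2' : MemLp (fun y => iteratedDeriv (r+1) g y) 2 volume := huH t ht (r+1) hm2
      have hdv : deriv (iteratedDeriv r g) = iteratedDeriv (r+1) g :=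
        (iteratedDeriv_succ).symm
      have hdiff : Differentiable ℝ (iteratedDeriv r g) :=
        hg.differentiable_iteratedDeriv r (by exact_mod_cast ENat.coe_lt_top r)
      have hcd : Continuous (deriv (iteratedDeriv r g)) := by
        rw [hdv]
        exact (hg.differentiable_iteratedDeriv (r+1) (by exact_mod_cast ENat.coe_lt_top (r+1))).continuous
      have hsb := sobolev_pointwise hdiff hcd h2 (by rw [hdv]; exact h2') y
      rw [hdv] at hsb
      have hsub : ({r, r+1} : Finset ℕ) ⊆ Finset.range (1 + β + 1) := by
        intro m hm
        simp only [Finset.mem_insert, Finset.mem_singleton] at hm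
        rcases hm with rfl | rfl <;> (rw [Finset.mem_range]; omega)
      have hpair : (eLpNorm (fun y => iteratedDeriv r g y) 2 volume).toReal ^ 2
            + (eLpNorm (fun y => iteratedDeriv (r+1) g y) 2 volume).toReal ^ 2
          ≤ ∑ m ∈ Finset.range (1 + β + 1),
            ((eLpNorm (fun y => iteratedDeriv m g y) 2 volume).toReal) ^ 2 := by
        have hps := Finset.sum_pair
          (f := fun m => ((eLpNorm (fun y => iteratedDeriv m g y) 2 volume).toReal) ^ 2)
          (by omega : r ≠ r + 1)
        rw [← hps]
        exact Finset.sum_le_sum_of_subset_of_nonneg hsub (fun _ _ _ => by positivity)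
      have hfin : iteratedDeriv r g y ^ 2 ≤ S ^ 2 := by
        rw [hSsq]
        exact le_trans hsb hpair
      nlinarith [abs_nonneg (iteratedDeriv r g y), sq_abs (iteratedDeriv r g y)]
    -- expansion
    have hexp : iteratedDeriv β (fun x' => a t x' (g x')) x
        = pR 0 β H (x, g x) + ((reprList β).map (fun e => termC H g e x)).sum :=
      repr_lemma hHs hg β x
    have hDx : DxIter β (fun x' => a t x' (g x')) x
        = (-Complex.I)^β * pR 0 β H (x, g x)
          + (-Complex.I)^β * ((reprList β).map (fun e => termC H g e x)).sum := by
      rw [DxIter_eq]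
      beta_reduce
      rw [hexp]
      ring
    -- main term bound
    have hmain : |((-Complex.I)^β * pR 0 β H (x, g x)).re| ≤ C * γ (g x) := by
      have h1 : (-Complex.I)^β * pR 0 β H (x, g x)
          = DxIter β (fun x' => a t x' (g x)) x := by
        rw [DxIter_eq]
        beta_reduce
        rw [iteratedDeriv_fst hHs β x (g x)]
      rw [h1]
      exact hRe β hβj t ht x (g x)
    -- remainder bound
    have hrem : ‖((reprList β).map (fun e => termC H g e x)).sum‖
        ≤ (reprList β).length * (C * γ (g x) * (1 + S ^ β)) := by
      have hγnn : 0 ≤ γ (g x) := (hγpos (g x)).le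
      have hKnn : 0 ≤ C * γ (g x) * (1 + S ^ β) := by positivity
      refine norm_listSum_le _ _ _ hKnn ?_
      intro e he
      obtain ⟨hq, hsum, hpos⟩ := reprList_inv β e he
      obtain ⟨q, β₁, rs⟩ := e
      dsimp only at hq hsum hpos
      have hterm : ‖termC H g (q, β₁, rs) x‖ = ‖pR q β₁ H (x, g x)‖ * ‖Gp g rs x‖ :=
        norm_mul _ _
      have hpR : ‖pR q β₁ H (x, g x)‖ ≤ C * γ (g x) := by
        have := norm_pR_le (A := fun x' w' => a t x' w') hHs q β₁ x (g x)
        rw [this]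
        exact hmix q β₁ hq t ht x (g x)
      have hGpb : ‖Gp g rs x‖ ≤ 1 + S ^ β := by
        have hM : (1:ℝ) ≤ max 1 S := le_max_left _ _
        have hGp1 : ‖Gp g rs x‖ ≤ (max 1 S) ^ rs.length := by
          refine Gp_norm_le hM ?_
          intro r hr
          have hrβ : r ≤ β := by
            have h1 := mem_le_listSum hr
            omega
          exact le_trans (hder r hrβ x) (le_max_right _ _)
        have hlen : rs.length ≤ β := by
          have h1 := length_le_listSum hpos
          omega
        have hGp2 : (max 1 S) ^ rs.length ≤ (max 1 S) ^ β :=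
          pow_le_pow_right₀ hM hlen
        have hGp3 : (max 1 S) ^ β ≤ 1 + S ^ β := by
          rcases le_total S 1 with h | h
          · rw [max_eq_left h]
            simp
            positivity
          · rw [max_eq_right h]
            have : (0:ℝ) ≤ 1 := zero_le_one
            linarith [pow_nonneg hSnn β]
        linarith
      calc ‖termC H g (q, β₁, rs) x‖ = ‖pR q β₁ H (x, g x)‖ * ‖Gp g rs x‖ := hterm
        _ ≤ (C * γ (g x)) * (1 + S ^ β) := by
            apply mul_le_mul hpR hGpb (norm_nonneg _) (by positivity)
        _ = C * γ (g x) * (1 + S ^ β) := by ring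
    -- combine
    have hγnn : 0 ≤ γ (g x) := (hγpos (g x)).le
    have h1 : |(DxIter β (fun x' => a t x' (g x')) x).re|
        ≤ C * γ (g x) + (reprList β).length * (C * γ (g x) * (1 + S ^ β)) := by
      rw [hDx, Complex.add_re]
      calc |((-Complex.I)^β * pR 0 β H (x, g x)).re
            + ((-Complex.I)^β * ((reprList β).map (fun e => termC H g e x)).sum).re|
          ≤ |((-Complex.I)^β * pR 0 β H (x, g x)).re|
            + |((-Complex.I)^β * ((reprList β).map (fun e => termC H g e x)).sum).re| :=
            abs_add_le _ _
        _ ≤ C * γ (g x) + (reprList β).length * (C * γ (g x) * (1 + S ^ β)) := by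
            refine add_le_add hmain ?_
            refine le_trans (Complex.abs_re_le_norm _) ?_
            rw [norm_mul]
            have : ‖(-Complex.I)^β‖ = 1 := by
              rw [norm_pow]
              simp
            rw [this, one_mul]
            exact hrem
    have hfinal : C * γ (g x) + (reprList β).length * (C * γ (g x) * (1 + S ^ β))
        ≤ C * (1 + (reprList β).length) * γ (g x) * (1 + S ^ β) := by
      have hSp : (0:ℝ) ≤ S ^ β := pow_nonneg hSnn β
      have hCg : (0:ℝ) ≤ C * γ (g x) := by positivity
      nlinarith [hCg, hSp]
    exact le_trans h1 hfinal
  choose Cb hCbpos hCb using key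
  refine ⟨∑ β ∈ Finset.range j, Cb β, ?_, ?_⟩
  · exact Finset.sum_pos (fun i _ => hCbpos i) ⟨0, Finset.mem_range.2 (by omega)⟩
  · intro β hβ1 hβj t ht x
    have hle : Cb β ≤ ∑ i ∈ Finset.range j, Cb i :=
      Finset.single_le_sum (fun i _ => (hCbpos i).le) (Finset.mem_range.2 (by omega))
    refine le_trans (hCb β hβ1 hβj t ht x) ?_
    have hSnn : 0 ≤ hSob (1 + β) (u t) := Real.rpow_nonneg (by positivity) _
    have hnn : 0 ≤ γ (u t x) * (1 + hSob (1 + β) (u t) ^ β) := by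
      have := (hγpos (u t x)).le
      have := pow_nonneg hSnn β
      positivity
    calc Cb β * γ (u t x) * (1 + hSob (1 + β) (u t) ^ β)
        = Cb β * (γ (u t x) * (1 + hSob (1 + β) (u t) ^ β)) := by ring
      _ ≤ (∑ i ∈ Finset.range j, Cb i) * (γ (u t x) * (1 + hSob (1 + β) (u t) ^ β)) :=
          mul_le_mul_of_nonneg_right hle hnn
      _ = (∑ i ∈ Finset.range j, Cb i) * γ (u t x) * (1 + hSob (1 + β) (u t) ^ β) := by ring
end

section
/- Let p ≥ 3, 3 ≤ j ≤ p−1, β ≥ 1 with ⌊β/2⌋ ≤ j−1, and suppose a: [0,T] × ℝ × ℝ → ℂ satisfies |Im(D_x^{β'} a)(t,x,w)| ≤ C·γ(w)·⟨x⟩^{−(j−⌊β'/2⌋)/(p−1)} for 0 ≤ ⌊β'/2⌋ ≤ j−1, and |(∂_w^q D_x^{β₁} a)(t,x,w)| ≤ C·γ(w)·⟨x⟩^{−(j−⌊(q+β₁)/2⌋)/(p−1)} for q ≥ 1, ⌊(q+β₁)/2⌋ ≤ j−1. Then for u ∈ C([0,T]; H^{4p−3}(ℝ)) there is C′ > 0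 with |Im D_x^β(a(t,x,u(t,x)))| ≤ C′·γ(u(t,x))·⟨x⟩^{−(j−⌊β/2⌋)/(p−1)}·(1 + ‖u(t,·)‖_{H^{1+β}}^β). -/
open MeasureTheory Set Finset

/-- The japanese bracket `⟨x⟩ = √(1+x²)`. -/
noncomputable def jb (x : ℝ) : ℝ := Real.sqrt (1 + x ^ 2)

section Aux
open Function
open scoped ContDiff

namespace FaaAux

lemma one_le_inf : (1 : WithTop ℕ∞) ≤ ∞ := by exact_mod_cast le_top
lemma two_le_inf : (2 : WithTop ℕ∞) ≤ ∞ := by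
  have : ((2:ℕ∞) : WithTop ℕ∞) ≤ ((⊤:ℕ∞) : WithTop ℕ∞) := WithTop.coe_le_coe.2 le_top
  simpa using this
lemma add_one_le_inf : ∞ + 1 ≤ ∞ := by simp
lemma nat_le_inf (q : ℕ) : (q : WithTop ℕ∞) ≤ ∞ := by exact_mod_cast le_top

noncomputable def pX (G : ℝ → ℝ → ℂ) : ℝ → ℝ → ℂ := fun x w => deriv (fun x' => G x' w) x
noncomputable def pW (G : ℝ → ℝ → ℂ) : ℝ → ℝ → ℂ := fun x w => deriv (fun w' => G x w') w

def Sm (G : ℝ → ℝ → ℂ) : Prop := ContDiff ℝ ∞ (uncurry G)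

lemma Sm.secX {G : ℝ → ℝ → ℂ} (h : Sm G) (w : ℝ) : ContDiff ℝ ∞ (fun x => G x w) :=
  h.comp (contDiff_prodMk_left w)

lemma Sm.secW {G : ℝ → ℝ → ℂ} (h : Sm G) (x : ℝ) : ContDiff ℝ ∞ (fun w => G x w) :=
  h.comp (contDiff_prodMk_right x)

lemma pX_eq_fderiv {G : ℝ → ℝ → ℂ} (h : Sm G) (x w : ℝ) :
    pX G x w = fderiv ℝ (uncurry G) (x, w) (1, 0) := by
  have hd : HasDerivAt (fun x' => (x', w)) ((1:ℝ), (0:ℝ)) x :=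
    (hasDerivAt_id x).prodMk (hasDerivAt_const x w)
  have hF : HasFDerivAt (uncurry G) (fderiv ℝ (uncurry G) (x, w)) (x, w) :=
    (h.differentiable (by simp)).differentiableAt.hasFDerivAt
  exact (hF.comp_hasDerivAt x hd).deriv

lemma pW_eq_fderiv {G : ℝ → ℝ → ℂ} (h : Sm G) (x w : ℝ) :
    pW G x w = fderiv ℝ (uncurry G) (x, w) (0, 1) := by
  have hd : HasDerivAt (fun w' => (x, w')) ((0:ℝ), (1:ℝ)) w :=
    (hasDerivAt_const w x).prodMk (hasDerivAt_id w)
  have hF : HasFDerivAt (uncurry G) (fderiv ℝ (uncurry G) (x, w)) (x, w) :=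
    (h.differentiable (by simp)).differentiableAt.hasFDerivAt
  exact (hF.comp_hasDerivAt w hd).deriv

lemma fderiv_apply_contDiff {G : ℝ → ℝ → ℂ} (h : Sm G) (v : ℝ × ℝ) :
    ContDiff ℝ ∞ (fun p : ℝ × ℝ => fderiv ℝ (uncurry G) p v) := by
  have h1 : ContDiff ℝ ∞ (fderiv ℝ (uncurry G)) := h.fderiv_right add_one_le_inf
  exact ((ContinuousLinearMap.apply ℝ ℂ v).contDiff).comp h1

lemma Sm.smX {G : ℝ → ℝ → ℂ} (h : Sm G) : Sm (pX G) := by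
  have he : uncurry (pX G) = fun p : ℝ × ℝ => fderiv ℝ (uncurry G) p (1, 0) := by
    funext p; exact pX_eq_fderiv h p.1 p.2
  rw [Sm, he]; exact fderiv_apply_contDiff h _

lemma Sm.smW {G : ℝ → ℝ → ℂ} (h : Sm G) : Sm (pW G) := by
  have he : uncurry (pW G) = fun p : ℝ × ℝ => fderiv ℝ (uncurry G) p (0, 1) := by
    funext p; exact pW_eq_fderiv h p.1 p.2
  rw [Sm, he]; exact fderiv_apply_contDiff h _

lemma second_apply {G : ℝ → ℝ → ℂ} (h : Sm G) (p v v' : ℝ × ℝ) :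
    fderiv ℝ (fun q : ℝ × ℝ => fderiv ℝ (uncurry G) q v) p v'
      = fderiv ℝ (fderiv ℝ (uncurry G)) p v' v := by
  have hdf : DifferentiableAt ℝ (fderiv ℝ (uncurry G)) p :=
    ((h.fderiv_right add_one_le_inf).differentiable (by simp)).differentiableAt
  have hc : HasFDerivAt (fun q : ℝ × ℝ => fderiv ℝ (uncurry G) q v)
      ((ContinuousLinearMap.apply ℝ ℂ v).comp (fderiv ℝ (fderiv ℝ (uncurry G)) p)) p :=
    ((ContinuousLinearMap.apply ℝ ℂ v).hasFDerivAt).comp p hdf.hasFDerivAt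
  rw [hc.fderiv]; rfl

lemma swap {G : ℝ → ℝ → ℂ} (h : Sm G) : pX (pW G) = pW (pX G) := by
  funext x w
  have hsymm : IsSymmSndFDerivAt ℝ (uncurry G) (x, w) :=
    (h.contDiffAt).isSymmSndFDerivAt (by simpa using two_le_inf)
  have heW : uncurry (pW G) = fun p : ℝ × ℝ => fderiv ℝ (uncurry G) p (0, 1) := by
    funext p; exact pW_eq_fderiv h p.1 p.2
  have heX : uncurry (pX G) = fun p : ℝ × ℝ => fderiv ℝ (uncurry G) p (1, 0) := by
    funext p; exact pX_eq_fderiv h p.1 p.2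
  calc pX (pW G) x w = fderiv ℝ (uncurry (pW G)) (x, w) (1, 0) := pX_eq_fderiv h.smW x w
    _ = fderiv ℝ (fderiv ℝ (uncurry G)) (x, w) (1, 0) (0, 1) := by rw [heW, second_apply h]
    _ = fderiv ℝ (fderiv ℝ (uncurry G)) (x, w) (0, 1) (1, 0) := hsymm _ _
    _ = fderiv ℝ (uncurry (pX G)) (x, w) (0, 1) := by rw [heX, second_apply h]
    _ = pW (pX G) x w := (pW_eq_fderiv h.smX x w).symm

lemma swap_iter {G : ℝ → ℝ → ℂ} (h : Sm G) (q : ℕ) : pX (pW^[q] G) = pW^[q] (pX G) := by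
  induction q generalizing G with
  | zero => rfl
  | succ q ih =>
    rw [Function.iterate_succ_apply, Function.iterate_succ_apply, ih h.smW, swap h]

lemma Sm.iterW {G : ℝ → ℝ → ℂ} (h : Sm G) (q : ℕ) : Sm (pW^[q] G) := by
  induction q generalizing G with
  | zero => exact h
  | succ q ih => rw [Function.iterate_succ_apply]; exact ih h.smW

lemma Sm.iterX {G : ℝ → ℝ → ℂ} (h : Sm G) (b : ℕ) : Sm (pX^[b] G) := by
  induction b generalizing G with
  | zero => exact h
  | succ b ih => rw [Function.iterate_succ_apply]; exact ih h.smX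

/-- `A q b G = ∂_w^q ∂_x^b G`. -/
noncomputable def A (q b : ℕ) (G : ℝ → ℝ → ℂ) : ℝ → ℝ → ℂ := pW^[q] (pX^[b] G)

lemma Sm.smA {G : ℝ → ℝ → ℂ} (h : Sm G) (q b : ℕ) : Sm (A q b G) := (h.iterX b).iterW q

lemma pX_iter_eq (G : ℝ → ℝ → ℂ) (b : ℕ) (x w : ℝ) :
    pX^[b] G x w = iteratedDeriv b (fun x' => G x' w) x := by
  induction b generalizing G with
  | zero => simp [iteratedDeriv_zero]
  | succ b ih =>
    rw [Function.iterate_succ_apply, ih (pX G), iteratedDeriv_succ']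
    rfl

lemma pW_iter_eq (G : ℝ → ℝ → ℂ) (q : ℕ) (x w : ℝ) :
    pW^[q] G x w = iteratedDeriv q (fun w' => G x w') w := by
  induction q generalizing G with
  | zero => simp [iteratedDeriv_zero]
  | succ q ih =>
    rw [Function.iterate_succ_apply, ih (pW G), iteratedDeriv_succ']
    rfl

end FaaAux

namespace FaaAux2
open FaaAux

lemma DxIter_eq {f : ℝ → ℂ} (hf : ContDiff ℝ ∞ f) (n : ℕ) (x : ℝ) :
    DxIter n f x = (-Complex.I) ^ n * iteratedDeriv n f x := by
  induction n generalizing x with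
  | zero => simp [DxIter]
  | succ n ih =>
    have hstep : DxIter (n+1) f = Dx (DxIter n f) := Function.iterate_succ_apply' Dx n f
    have hfe : DxIter n f = fun y => (-Complex.I) ^ n * iteratedDeriv n f y := funext fun y => ih y
    rw [hstep, hfe]
    show -Complex.I * deriv (fun y => (-Complex.I) ^ n * iteratedDeriv n f y) x = _
    have hd : DifferentiableAt ℝ (iteratedDeriv n f) x := by
      have := (hf.iterate_deriv n).differentiable (by simp)
      rw [← iteratedDeriv_eq_iterate] at this
      exact this x
    rw [deriv_const_mul _ hd, ← iteratedDeriv_succ]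
    ring

lemma iter_const_mul {f : ℝ → ℂ} (c : ℂ) (n : ℕ) (hf : ContDiff ℝ (n : ℕ) f) (w : ℝ) :
    iteratedDeriv n (fun z => c * f z) w = c * iteratedDeriv n f w := by
  have : (fun z => c * f z) = c • f := by funext z; simp [Pi.smul_apply, smul_eq_mul]
  rw [this, ← iteratedDerivWithin_univ, ← iteratedDerivWithin_univ]
  exact iteratedDerivWithin_const_smul (Set.mem_univ w) uniqueDiffOn_univ c hf.contDiffWithinAt

lemma sm_contDiff_nat {G : ℝ → ℝ → ℂ} (h : Sm G) (x : ℝ) (n : ℕ) :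
    ContDiff ℝ (n : ℕ) (fun w => G x w) := (h.secW x).of_le (nat_le_inf n)

lemma mixedD_eq {G : ℝ → ℝ → ℂ} (h : Sm G) (q b : ℕ) (x w : ℝ) :
    mixedD q b G x w = (-Complex.I) ^ b * A q b G x w := by
  unfold mixedD
  have h1 : (fun w' => DxIter b (fun x' => G x' w') x)
      = fun w' => (-Complex.I) ^ b * pX^[b] G x w' := by
    funext w'
    rw [DxIter_eq (h.secX w') b x, pX_iter_eq]
  rw [h1, iter_const_mul _ q (sm_contDiff_nat (h.iterX b) x q) w]
  unfold A
  rw [pW_iter_eq]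

/-- chain rule for `x ↦ H x (v x)`. -/
lemma hasDerivAt_comp {H : ℝ → ℝ → ℂ} (hH : Sm H) {v : ℝ → ℝ} (hv : ContDiff ℝ ∞ v) (x : ℝ) :
    HasDerivAt (fun x' => H x' (v x'))
      (pX H x (v x) + pW H x (v x) * deriv v x) x := by
  have hvd : HasDerivAt v (deriv v x) x :=
    ((hv.differentiable (by simp)) x).hasDerivAt
  have hφ : HasDerivAt (fun x' => (x', v x')) ((1:ℝ), deriv v x) x :=
    (hasDerivAt_id x).prodMk hvd
  have hF : HasFDerivAt (uncurry H) (fderiv ℝ (uncurry H) (x, v x)) (x, v x) :=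
    ((hH.differentiable (by simp)) _).hasFDerivAt
  have hc := hF.comp_hasDerivAt x hφ
  have : fderiv ℝ (uncurry H) (x, v x) ((1:ℝ), deriv v x)
      = pX H x (v x) + pW H x (v x) * deriv v x := by
    have hsplit : ((1:ℝ), deriv v x) = ((1:ℝ), (0:ℝ)) + (deriv v x) • ((0:ℝ), (1:ℝ)) := by
      simp [Prod.ext_iff]
    rw [hsplit, map_add, _root_.map_smul, pX_eq_fderiv hH, pW_eq_fderiv hH, Complex.real_smul]
    ring
  rw [← this]
  exact hc

end FaaAux2

namespace FaaAux3
open FaaAux FaaAux2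

def bumps : List ℕ → List (List ℕ)
  | [] => []
  | r :: rest => ((r+1) :: rest) :: (bumps rest).map (r :: ·)

noncomputable def P (v : ℝ → ℝ) (rs : List ℕ) (x : ℝ) : ℂ :=
  (rs.map (fun r => ((iteratedDeriv r v x : ℝ) : ℂ))).prod

lemma P_nil (v : ℝ → ℝ) : P v [] = fun _ => 1 := by funext x; simp [P]

lemma P_cons (v : ℝ → ℝ) (r : ℕ) (rs : List ℕ) (x : ℝ) :
    P v (r :: rs) x = ((iteratedDeriv r v x : ℝ) : ℂ) * P v rs x := by simp [P]

lemma iter_hasDerivAt {v : ℝ → ℝ} (hv : ContDiff ℝ ∞ v) (r : ℕ) (x : ℝ) :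
    HasDerivAt (iteratedDeriv r v) (iteratedDeriv (r+1) v x) x := by
  have hd : Differentiable ℝ (iteratedDeriv r v) := by
    have := (hv.iterate_deriv r).differentiable (by simp)
    rwa [← iteratedDeriv_eq_iterate] at this
  have := (hd x).hasDerivAt
  rwa [← iteratedDeriv_succ] at this

lemma P_hasDerivAt {v : ℝ → ℝ} (hv : ContDiff ℝ ∞ v) (rs : List ℕ) (x : ℝ) :
    HasDerivAt (P v rs) (((bumps rs).map (fun rs' => P v rs' x)).sum) x := by
  induction rs with
  | nil => rw [P_nil]; simpa [bumps] using hasDerivAt_const x (1:ℂ)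
  | cons r rest ih =>
    have hc : HasDerivAt (fun x => ((iteratedDeriv r v x : ℝ) : ℂ))
        ((iteratedDeriv (r+1) v x : ℝ) : ℂ) x := (iter_hasDerivAt hv r x).ofReal_comp
    have hm := hc.mul ih
    have he : (fun x => ((iteratedDeriv r v x : ℝ) : ℂ) * P v rest x) = P v (r :: rest) := by
      funext y; rw [P_cons]
    simp only [Pi.mul_def] at hm
    rw [he] at hm
    convert hm using 1
    · rfl
    rw [bumps]
    simp only [List.map_cons, List.sum_cons, List.map_map]
    have hcomp : ((fun rs' => P v rs' x) ∘ (r :: ·)) = fun rs' => ((iteratedDeriv r v x : ℝ) : ℂ) * P v rs' x := by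
      funext rs'; exact P_cons v r rs' x
    rw [hcomp, List.sum_map_mul_left]
    simp only [P_cons]
    try ring

noncomputable def Tm (G : ℝ → ℝ → ℂ) (v : ℝ → ℝ) (t : ℕ × ℕ × List ℕ) (x : ℝ) : ℂ :=
  A t.1 t.2.1 G x (v x) * P v t.2.2 x

def newTerms (t : ℕ × ℕ × List ℕ) : List (ℕ × ℕ × List ℕ) :=
  (t.1, t.2.1 + 1, t.2.2) :: (t.1 + 1, t.2.1, 1 :: t.2.2) ::
    (bumps t.2.2).map (fun rs' => (t.1, t.2.1, rs'))

lemma Tm_hasDerivAt {G : ℝ → ℝ → ℂ} (hG : Sm G) {v : ℝ → ℝ} (hv : ContDiff ℝ ∞ v)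
    (t : ℕ × ℕ × List ℕ) (x : ℝ) :
    HasDerivAt (Tm G v t) (((newTerms t).map (fun t' => Tm G v t' x)).sum) x := by
  obtain ⟨q, b, rs⟩ := t
  have hA : Sm (A q b G) := hG.smA q b
  have h1 := (hasDerivAt_comp hA hv x).mul (P_hasDerivAt hv rs x)
  have he : (fun x => A q b G x (v x) * P v rs x) = Tm G v (q, b, rs) := rfl
  simp only [Pi.mul_def] at h1
  rw [he] at h1
  convert h1 using 1
  · rfl
  have hpX : pX (A q b G) = A q (b+1) G := by
    unfold A
    rw [swap_iter (hG.iterX b) q]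
    congr 1
    exact (Function.iterate_succ_apply' pX b G).symm
  have hpW : pW (A q b G) = A (q+1) b G := (Function.iterate_succ_apply' pW q _).symm
  simp only [newTerms, List.map_cons, List.sum_cons, List.map_map]
  unfold Tm
  simp only []
  rw [hpX, hpW]
  have h2 : ((bumps rs).map ((fun t' : ℕ × ℕ × List ℕ => A t'.1 t'.2.1 G x (v x) * P v t'.2.2 x)
      ∘ (fun rs' => (q, b, rs')))).sum = A q b G x (v x) * ((bumps rs).map (fun rs' => P v rs' x)).sum := by
    rw [← List.sum_map_mul_left]
    congr 1
  rw [h2, P_cons, iteratedDeriv_one]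
  push_cast
  ring

lemma listSum_hasDerivAt {ι : Type*} (L : List ι) (f : ι → ℝ → ℂ) (f' : ι → ℂ) (x : ℝ)
    (h : ∀ t ∈ L, HasDerivAt (f t) (f' t) x) :
    HasDerivAt (fun y => (L.map (fun t => f t y)).sum) ((L.map f').sum) x := by
  induction L with
  | nil => simpa using hasDerivAt_const x (0:ℂ)
  | cons a l ih =>
    simp only [List.map_cons, List.sum_cons]
    exact (h a (by simp)).add (ih (fun t ht => h t (by simp [ht])))

def ok (β : ℕ) (t : ℕ × ℕ × List ℕ) : Prop :=
  t.1 = t.2.2.length ∧ t.2.1 + t.2.2.sum = β ∧ ∀ r ∈ t.2.2, 1 ≤ r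

lemma bumps_mem {rs' rs : List ℕ} (h : rs' ∈ bumps rs) :
    rs'.length = rs.length ∧ rs'.sum = rs.sum + 1 ∧ ((∀ r ∈ rs, 1 ≤ r) → ∀ r ∈ rs', 1 ≤ r) := by
  induction rs generalizing rs' with
  | nil => simp [bumps] at h
  | cons r rest ih =>
    rw [bumps] at h
    rcases List.mem_cons.1 h with h1 | h2
    · subst h1
      refine ⟨by simp, by simp; ring, ?_⟩
      intro hall r' hr'
      rcases List.mem_cons.1 hr' with h | h
      · omega
      · exact hall r' (List.mem_cons_of_mem _ h)
    · obtain ⟨rs'', hrs'', rfl⟩ := List.mem_map.1 h2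
      obtain ⟨hl, hs, hmin⟩ := ih hrs''
      refine ⟨by simp [hl], by simp [hs]; ring, ?_⟩
      intro hall r' hr'
      rcases List.mem_cons.1 hr' with h | h
      · subst h; exact hall r' (by simp)
      · exact hmin (fun z hz => hall z (List.mem_cons_of_mem _ hz)) r' h

lemma ok_newTerms {β : ℕ} {t : ℕ × ℕ × List ℕ} (h : ok β t) :
    ∀ t' ∈ newTerms t, ok (β + 1) t' := by
  obtain ⟨q, b, rs⟩ := t
  obtain ⟨h1, h2, h3⟩ := h
  have h1' : q = rs.length := h1
  have h2' : b + rs.sum = β := h2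
  have h3' : ∀ r ∈ rs, 1 ≤ r := h3
  clear h1 h2 h3
  intro t' ht'
  simp only [newTerms] at ht'
  rcases List.mem_cons.1 ht' with rfl | ht'
  · exact ⟨h1', by show b + 1 + rs.sum = β + 1; omega, h3'⟩
  rcases List.mem_cons.1 ht' with rfl | ht'
  · refine ⟨by simp [h1'], by show b + (1 :: rs).sum = β + 1; simp; omega, ?_⟩
    intro r hr
    rcases List.mem_cons.1 hr with rfl | hr
    · exact le_refl 1
    · exact h3' r hr
  · obtain ⟨rs', hrs', rfl⟩ := List.mem_map.1 ht'
    obtain ⟨hl, hs, hmin⟩ := bumps_mem hrs'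
    refine ⟨by show q = rs'.length; omega, by show b + rs'.sum = β + 1; omega, hmin h3'⟩

lemma sum_map_flatMap {α γ : Type*} (l : List α) (g : α → List γ) (f : γ → ℂ) :
    ((l.flatMap g).map f).sum = (l.map (fun a => ((g a).map f).sum)).sum := by
  induction l with
  | nil => simp
  | cons a l ih => simp [ih]

/-- Faà di Bruno, tailored version. -/
lemma faa (β : ℕ) : ∃ L : List (ℕ × ℕ × List ℕ), (∀ t ∈ L, ok β t) ∧
    ∀ (G : ℝ → ℝ → ℂ) (v : ℝ → ℝ), Sm G → ContDiff ℝ ∞ v → ∀ x : ℝ,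
      iteratedDeriv β (fun x' => G x' (v x')) x = (L.map (fun t => Tm G v t x)).sum := by
  induction β with
  | zero =>
    refine ⟨[(0, 0, [])], ?_, ?_⟩
    · intro t ht; simp at ht; subst ht; exact ⟨rfl, rfl, by simp⟩
    · intro G v hG hv x
      simp [Tm, A, P, iteratedDeriv_zero]
  | succ β ih =>
    obtain ⟨L, hok, hL⟩ := ih
    refine ⟨L.flatMap newTerms, ?_, ?_⟩
    · intro t' ht'
      obtain ⟨t, ht, ht'2⟩ := List.mem_flatMap.1 ht'
      exact ok_newTerms (hok t ht) t' ht'2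
    · intro G v hG hv x
      rw [iteratedDeriv_succ]
      have he : iteratedDeriv β (fun x' => G x' (v x'))
          = fun y => (L.map (fun t => Tm G v t y)).sum := funext fun y => hL G v hG hv y
      rw [he]
      have hder := listSum_hasDerivAt L (fun t => Tm G v t)
        (fun t => ((newTerms t).map (fun t' => Tm G v t' x)).sum) x
        (fun t _ => Tm_hasDerivAt hG hv t x)
      rw [hder.deriv, sum_map_flatMap]

end FaaAux3

namespace SobAux
open MeasureTheory
open scoped ENNReal

lemma l2sq {f : ℝ → ℝ} (h : MemLp f 2 volume) :
    ((eLpNorm f 2 volume).toReal) ^ 2 = ∫ x, f x ^ 2 := by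
  rw [h.eLpNorm_eq_integral_rpow_norm (by norm_num) (by norm_num)]
  have hnn : 0 ≤ ∫ a, ‖f a‖ ^ ((2:ENNReal).toReal) := by
    apply integral_nonneg; intro a; positivity
  rw [ENNReal.toReal_ofReal (by positivity)]
  have h2 : ((2:ENNReal).toReal) = (2:ℝ) := by norm_num
  rw [h2] at hnn ⊢
  rw [← Real.rpow_natCast ((∫ a, ‖f a‖ ^ (2:ℝ)) ^ ((2:ℝ)⁻¹)) 2, ← Real.rpow_mul hnn]
  norm_num

lemma sup_sq_le {f : ℝ → ℝ} (hf : ContDiff ℝ ∞ f)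
    (h2 : MemLp f 2 volume) (h2' : MemLp (deriv f) 2 volume) (x : ℝ) :
    f x ^ 2 ≤ 2 * (((eLpNorm f 2 volume).toReal) ^ 2 + ((eLpNorm (deriv f) 2 volume).toReal) ^ 2) := by
  set I : ℝ := ∫ y, f y ^ 2 with hI
  set I' : ℝ := ∫ y, deriv f y ^ 2 with hI'
  have hIf : Integrable (fun y => f y ^ 2) volume := h2.integrable_sq
  have hIf' : Integrable (fun y => deriv f y ^ 2) volume := h2'.integrable_sq
  have hcf : Continuous f := hf.continuous
  have hcf' : Continuous (deriv f) := hf.continuous_deriv FaaAux.one_le_inf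
  -- integrability of 2 f f'
  have hcont : Continuous (fun y => 2 * f y * deriv f y) := (continuous_const.mul hcf).mul hcf'
  have hprod : Integrable (fun y => 2 * f y * deriv f y) volume := by
    apply Integrable.mono' (hIf.add hIf') hcont.aestronglyMeasurable
    filter_upwards with y
    have := two_mul_le_add_sq |f y| |deriv f y|
    simp only [Real.norm_eq_abs]
    calc |2 * f y * deriv f y| = 2 * |f y| * |deriv f y| := by
          rw [abs_mul, abs_mul]; simp [abs_of_nonneg]
      _ ≤ |f y| ^ 2 + |deriv f y| ^ 2 := this
      _ = f y ^ 2 + deriv f y ^ 2 := by rw [sq_abs, sq_abs]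
  -- FTC
  have hftc : ∀ y z : ℝ, f z ^ 2 - f y ^ 2 = ∫ s in y..z, 2 * f s * deriv f s := by
    intro y z
    rw [intervalIntegral.integral_eq_sub_of_hasDerivAt (fun s _ => ?_) hprod.intervalIntegrable]
    have hd : HasDerivAt f (deriv f s) s := ((hf.differentiable (by simp)) s).hasDerivAt
    have := hd.pow 2
    rw [Pi.pow_def] at this
    simpa [mul_comm, mul_assoc] using this
  -- bound on the interval integral
  have habs : ∀ y z : ℝ, |∫ s in y..z, 2 * f s * deriv f s| ≤ I + I' := by
    intro y z
    have key : ∀ y z : ℝ, y ≤ z → |∫ s in y..z, 2 * f s * deriv f s| ≤ I + I' := by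
      intro y z hyz
      calc |∫ s in y..z, 2 * f s * deriv f s| ≤ ∫ s in y..z, |2 * f s * deriv f s| :=
            intervalIntegral.abs_integral_le_integral_abs hyz
        _ = ∫ s in Set.Ioc y z, |2 * f s * deriv f s| := by
            rw [intervalIntegral.integral_of_le hyz]
        _ ≤ ∫ s, |2 * f s * deriv f s| := by
            apply setIntegral_le_integral hprod.abs
            filter_upwards with s using abs_nonneg _
        _ ≤ ∫ s, (f s ^ 2 + deriv f s ^ 2) := by
            apply integral_mono hprod.abs (hIf.add hIf')
            intro s
            have := two_mul_le_add_sq |f s| |deriv f s|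
            calc |2 * f s * deriv f s| = 2 * |f s| * |deriv f s| := by
                  rw [abs_mul, abs_mul]; simp [abs_of_nonneg]
              _ ≤ |f s| ^ 2 + |deriv f s| ^ 2 := this
              _ = f s ^ 2 + deriv f s ^ 2 := by rw [sq_abs, sq_abs]
        _ = I + I' := integral_add hIf hIf'
    rcases le_total y z with h | h
    · exact key y z h
    · rw [intervalIntegral.integral_symm, abs_neg]
      exact key z y h
  -- good point
  have hgood : ∃ y : ℝ, f y ^ 2 ≤ I := by
    have hvol : volume (Set.Icc (0:ℝ) 1) = 1 := by rw [Real.volume_Icc]; norm_num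
    obtain ⟨y, _, hy⟩ := exists_le_setAverage (μ := volume) (s := Set.Icc (0:ℝ) 1)
      (f := fun s => f s ^ 2) (by rw [hvol]; norm_num) (by rw [hvol]; norm_num)
      hIf.integrableOn
    refine ⟨y, hy.trans ?_⟩
    rw [setAverage_eq, measureReal_def, hvol]
    simp only [ENNReal.toReal_one, inv_one, one_smul]
    apply setIntegral_le_integral hIf
    filter_upwards with s using sq_nonneg _
  obtain ⟨y, hy⟩ := hgood
  have hIpos : 0 ≤ I := integral_nonneg fun s => sq_nonneg _
  have hI'pos : 0 ≤ I' := integral_nonneg fun s => sq_nonneg _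
  have := hftc y x
  have hfx : f x ^ 2 ≤ I + (I + I') := by
    have : f x ^ 2 = f y ^ 2 + ∫ s in y..x, 2 * f s * deriv f s := by linarith [hftc y x]
    rw [this]
    have := habs y x
    have h2 := le_abs_self (∫ s in y..x, 2 * f s * deriv f s)
    linarith
  rw [l2sq h2, l2sq h2', ← hI, ← hI']
  linarith
end SobAux

namespace SobAux
open MeasureTheory FaaAux
open scoped ContDiff

lemma hSob_nonneg (n : ℕ) (v : ℝ → ℝ) : 0 ≤ hSob n v :=
  Real.rpow_nonneg (Finset.sum_nonneg fun _ _ => sq_nonneg _) _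

lemma hSob_sq (n : ℕ) (v : ℝ → ℝ) :
    hSob n v ^ 2 = ∑ m ∈ Finset.range (n + 1),
      ((eLpNorm (fun x => iteratedDeriv m v x) 2 volume).toReal) ^ 2 := by
  rw [hSob, ← Real.rpow_natCast (_ ^ (1/2:ℝ)) 2, ← Real.rpow_mul
    (Finset.sum_nonneg fun _ _ => sq_nonneg _)]
  norm_num

lemma deriv_sup_bound {β : ℕ} {v : ℝ → ℝ} (hv : ContDiff ℝ ∞ v)
    (hm2 : ∀ m ≤ 1 + β, MemLp (fun x => iteratedDeriv m v x) 2 volume)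
    {m : ℕ} (hm : m ≤ β) (x : ℝ) :
    |iteratedDeriv m v x| ≤ Real.sqrt 2 * hSob (1 + β) v := by
  set f := iteratedDeriv m v with hf
  have hfs : ContDiff ℝ ∞ f := by
    have := hv.iterate_deriv m
    rwa [← iteratedDeriv_eq_iterate] at this
  have h2 : MemLp f 2 volume := by
    have := hm2 m (by omega); exact this
  have h2' : MemLp (deriv f) 2 volume := by
    have := hm2 (m+1) (by omega)
    have he : (fun x => iteratedDeriv (m+1) v x) = deriv f := by
      funext y; rw [iteratedDeriv_succ]
    rwa [he] at this
  have key := sup_sq_le hfs h2 h2' x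
  set N : ℕ → ℝ := fun k => (eLpNorm (fun x => iteratedDeriv k v x) 2 volume).toReal with hN
  have hNf : (eLpNorm f 2 volume).toReal = N m := rfl
  have hNf' : (eLpNorm (deriv f) 2 volume).toReal = N (m+1) := by
    have he : (fun x => iteratedDeriv (m+1) v x) = deriv f := by
      funext y; rw [iteratedDeriv_succ]
    rw [hN]; simp only [he]
  have hsum : N m ^ 2 + N (m+1) ^ 2 ≤ hSob (1 + β) v ^ 2 := by
    rw [hSob_sq]
    have hsub : ({m, m+1} : Finset ℕ) ⊆ Finset.range (1 + β + 1) := by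
      intro k hk
      simp only [Finset.mem_insert, Finset.mem_singleton] at hk
      rcases hk with rfl | rfl <;> (apply Finset.mem_range.2; omega)
    have := Finset.sum_le_sum_of_subset_of_nonneg hsub
      (fun i _ _ => sq_nonneg (N i))
    rwa [Finset.sum_pair (by omega : m ≠ m + 1)] at this
  have hfx : f x ^ 2 ≤ 2 * hSob (1 + β) v ^ 2 := by
    rw [hNf, hNf'] at key
    linarith
  have habs : |f x| = Real.sqrt (f x ^ 2) := (Real.sqrt_sq_eq_abs _).symm
  rw [habs]
  calc Real.sqrt (f x ^ 2) ≤ Real.sqrt (2 * hSob (1 + β) v ^ 2) := Real.sqrt_le_sqrt hfx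
    _ = Real.sqrt 2 * Real.sqrt (hSob (1 + β) v ^ 2) := Real.sqrt_mul (by norm_num) _
    _ = Real.sqrt 2 * hSob (1 + β) v := by
        rw [Real.sqrt_sq_eq_abs, abs_of_nonneg (hSob_nonneg _ _)]

lemma len_le_sum {rs : List ℕ} (h : ∀ r ∈ rs, 1 ≤ r) : rs.length ≤ rs.sum := by
  induction rs with
  | nil => simp
  | cons r rest ih =>
    simp only [List.length_cons, List.sum_cons]
    have h1 := h r (by simp)
    have h2 := ih (fun z hz => h z (List.mem_cons_of_mem _ hz))
    omega

lemma im_sum_le {α : Type*} (l : List α) (f : α → ℂ) (B : ℝ) (hB : 0 ≤ B)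
    (h : ∀ t ∈ l, |(f t).im| ≤ B) : |((l.map f).sum).im| ≤ l.length * B := by
  induction l with
  | nil => simp
  | cons a l ih =>
    simp only [List.map_cons, List.sum_cons, Complex.add_im, List.length_cons]
    calc |(f a).im + ((l.map f).sum).im| ≤ |(f a).im| + |((l.map f).sum).im| := abs_add_le _ _
      _ ≤ B + l.length * B := add_le_add (h a (by simp))
          (ih (fun t ht => h t (List.mem_cons_of_mem _ ht)))
      _ = (l.length + 1) * B := by ring
      _ = ((l.length + 1 : ℕ) : ℝ) * B := by push_cast; ring

lemma P_norm_le (v : ℝ → ℝ) (rs : List ℕ) (x : ℝ) (M : ℝ) (hM0 : 0 ≤ M)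
    (hM : ∀ r ∈ rs, |iteratedDeriv r v x| ≤ M) :
    ‖FaaAux3.P v rs x‖ ≤ M ^ rs.length := by
  induction rs with
  | nil => simp [FaaAux3.P]
  | cons r rest ih =>
    rw [FaaAux3.P_cons, norm_mul]
    simp only [List.length_cons, pow_succ]
    rw [mul_comm (M ^ rest.length) M]
    apply mul_le_mul ?_ (ih fun z hz => hM z (List.mem_cons_of_mem _ hz)) (norm_nonneg _)
      hM0
    rw [Complex.norm_real, Real.norm_eq_abs]
    exact hM r (by simp)

lemma one_le_jb (x : ℝ) : 1 ≤ jb x := by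
  rw [jb]
  exact Real.one_le_sqrt.2 (by nlinarith [sq_nonneg x])

end SobAux

namespace FinAux
open MeasureTheory FaaAux FaaAux2 FaaAux3 SobAux
open scoped ContDiff

lemma pow_bound (S : ℝ) (hS0 : 0 ≤ S) (β : ℕ) :
    (1 + Real.sqrt 2 * S) ^ β ≤ (2 + 2 * Real.sqrt 2) ^ β * (1 + S ^ β) := by
  have h2 : 0 ≤ Real.sqrt 2 := Real.sqrt_nonneg 2
  have hstep : 1 + Real.sqrt 2 * S ≤ (2 + 2 * Real.sqrt 2) * max 1 S := by
    rcases le_total S 1 with h | h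
    · rw [max_eq_left h]; nlinarith
    · rw [max_eq_right h]; nlinarith
  calc (1 + Real.sqrt 2 * S) ^ β ≤ ((2 + 2 * Real.sqrt 2) * max 1 S) ^ β :=
        pow_le_pow_left₀ (by positivity) hstep β
    _ = (2 + 2 * Real.sqrt 2) ^ β * (max 1 S) ^ β := mul_pow _ _ _
    _ ≤ (2 + 2 * Real.sqrt 2) ^ β * (1 + S ^ β) := by
        apply mul_le_mul_of_nonneg_left ?_ (by positivity)
        rcases le_total S 1 with h | h
        · rw [max_eq_left h]
          have : (0:ℝ) ≤ S ^ β := pow_nonneg hS0 β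
          simpa using by linarith
        · rw [max_eq_right h]
          linarith

end FinAux


end Aux

open scoped ContDiff

/-- Lemma 2.2, formula (2.14): decay estimate of the imaginary part of spatial derivatives
of the composed coefficient `a_j(t,x,u(t,x))`. -/
theorem imag_part_composed_estimate
    (p j β : ℕ) (hp : 3 ≤ p) (hj3 : 3 ≤ j) (hjp : j ≤ p - 1)
    (hβ1 : 1 ≤ β) (hβ : β / 2 ≤ j - 1)
    (T : ℝ) (hT : 0 < T)
    (a : ℝ → ℝ → ℝ → ℂ) (C : ℝ) (hC : 0 < C) (γ : ℝ → ℝ) (hγ : Continuous γ)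
    (hγpos : ∀ w, 0 < γ w)
    (haC : Continuous fun q : ℝ × ℝ × ℝ => a q.1 q.2.1 q.2.2)
    (haS : ∀ t, ContDiff ℝ (⊤ : ℕ∞) (fun q : ℝ × ℝ => a t q.1 q.2))
    (hIm : ∀ β' : ℕ, β' / 2 ≤ j - 1 → ∀ t ∈ Icc (0:ℝ) T, ∀ x w : ℝ,
      |(DxIter β' (fun x' => a t x' w) x).im| ≤
        C * γ w * jb x ^ (-(((j : ℝ) - (β' / 2 : ℕ)) / ((p : ℝ) - 1))))
    (hmix : ∀ q β₁ : ℕ, 1 ≤ q → (q + β₁) / 2 ≤ j - 1 → ∀ t ∈ Icc (0:ℝ) T, ∀ x w : ℝ,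
      ‖mixedD q β₁ (fun x' w' => a t x' w') x w‖ ≤
        C * γ w * jb x ^ (-(((j : ℝ) - ((q + β₁) / 2 : ℕ)) / ((p : ℝ) - 1))))
    (u : ℝ → ℝ → ℝ)
    (huC : Continuous fun q : ℝ × ℝ => u q.1 q.2)
    (huS : ∀ t, ContDiff ℝ (⊤ : ℕ∞) (u t))
    (huH : ∀ t ∈ Icc (0:ℝ) T, ∀ m ≤ 4 * p - 3,
      MemLp (fun x => iteratedDeriv m (u t) x) 2 volume) :
    ∃ C' > 0, ∀ t ∈ Icc (0:ℝ) T, ∀ x : ℝ,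
      |(DxIter β (fun x' => a t x' (u t x')) x).im| ≤
        C' * γ (u t x) * jb x ^ (-(((j : ℝ) - (β / 2 : ℕ)) / ((p : ℝ) - 1))) *
          (1 + hSob (1 + β) (u t) ^ β) := by
  obtain ⟨L, hok, hL⟩ := FaaAux3.faa β
  have hsq2 : (0:ℝ) ≤ Real.sqrt 2 := Real.sqrt_nonneg 2
  set D : ℝ := (2 + 2 * Real.sqrt 2) ^ β with hD
  have hD1 : (1:ℝ) ≤ D := one_le_pow₀ (by nlinarith)
  have hD0 : (0:ℝ) < D := by linarith
  refine ⟨(L.length : ℝ) * (C * D) + 1, by positivity, ?_⟩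
  intro t ht x
  set G : ℝ → ℝ → ℂ := fun x' w' => a t x' w' with hGdef
  set v : ℝ → ℝ := u t with hvdef
  have hGs : FaaAux.Sm G := (haS t).of_le (by simp)
  have hvs : ContDiff ℝ ∞ v := (huS t).of_le (by simp)
  have hg : ContDiff ℝ ∞ (fun x' => G x' (v x')) :=
    hGs.comp (contDiff_id.prodMk hvs)
  set S : ℝ := hSob (1 + β) v with hSdef
  have hS0 : 0 ≤ S := SobAux.hSob_nonneg _ _
  have hSb0 : (0:ℝ) ≤ S ^ β := pow_nonneg hS0 β
  have hjb1 : 1 ≤ jb x := SobAux.one_le_jb x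
  have hjbE : 0 < jb x ^ (-(((j : ℝ) - (β / 2 : ℕ)) / ((p : ℝ) - 1))) :=
    Real.rpow_pos_of_pos (by linarith) _
  have hγx : 0 < γ (v x) := hγpos _
  have hp1 : (0:ℝ) < (p:ℝ) - 1 := by
    have : (3:ℝ) ≤ (p:ℝ) := by exact_mod_cast hp
    linarith
  have hmem : ∀ m ≤ 1 + β, MemLp (fun y => iteratedDeriv m v y) 2 volume := by
    intro m hm
    exact huH t ht m (by omega)
  -- per-term bound
  have hterm : ∀ τ ∈ L, |((-Complex.I)^β * FaaAux3.Tm G v τ x).im|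
      ≤ C * γ (v x) * jb x ^ (-(((j : ℝ) - (β / 2 : ℕ)) / ((p : ℝ) - 1))) * (D * (1 + S ^ β)) := by
    intro τ hτ
    obtain ⟨q, b, rs⟩ := τ
    obtain ⟨hq, hsum, hpos⟩ := hok _ hτ
    have hq' : q = rs.length := hq
    have hsum' : b + rs.sum = β := hsum
    have hpos' : ∀ r ∈ rs, 1 ≤ r := hpos
    have hlen := SobAux.len_le_sum hpos'
    have hqb : q + b ≤ β := by omega
    have hfloor : (q + b) / 2 ≤ j - 1 := by omega
    rcases Nat.eq_zero_or_pos q with hq0 | hq1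
    · subst hq0
      have hrs : rs = [] := List.length_eq_zero_iff.1 hq'.symm
      subst hrs
      have hb : b = β := by simpa using hsum'
      rw [hb]
      have hTm : FaaAux3.Tm G v (0, β, []) x = FaaAux.A 0 β G x (v x) := by
        simp [FaaAux3.Tm, FaaAux3.P]
      have hDx : (-Complex.I)^β * FaaAux3.Tm G v (0, β, []) x
          = DxIter β (fun x' => G x' (v x)) x := by
        rw [hTm, FaaAux2.DxIter_eq (hGs.secX (v x)) β x, ← FaaAux.pX_iter_eq]
        rfl
      rw [hDx]
      have hIm' : |(DxIter β (fun x' => G x' (v x)) x).im|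
          ≤ C * γ (v x) * jb x ^ (-(((j : ℝ) - (β / 2 : ℕ)) / ((p : ℝ) - 1))) :=
        hIm β hβ t ht x (v x)
      calc |(DxIter β (fun x' => G x' (v x)) x).im|
          ≤ C * γ (v x) * jb x ^ (-(((j : ℝ) - (β / 2 : ℕ)) / ((p : ℝ) - 1))) := hIm'
        _ ≤ _ := by
            nth_rewrite 1 [← mul_one (C * γ (v x) * jb x ^ (-(((j : ℝ) - (β / 2 : ℕ)) / ((p : ℝ) - 1))))]
            apply mul_le_mul_of_nonneg_left ?_ (by positivity)
            nlinarith
    · -- q ≥ 1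
      have him := Complex.abs_im_le_norm ((-Complex.I)^β * FaaAux3.Tm G v (q, b, rs) x)
      have hnormI : ‖(-Complex.I)^β‖ = 1 := by
        rw [norm_pow, norm_neg, Complex.norm_I, one_pow]
      have hTmnorm : ‖(-Complex.I)^β * FaaAux3.Tm G v (q, b, rs) x‖
          = ‖FaaAux.A q b G x (v x)‖ * ‖FaaAux3.P v rs x‖ := by
        rw [norm_mul, hnormI, one_mul, FaaAux3.Tm, norm_mul]
      have hAnorm : ‖FaaAux.A q b G x (v x)‖ = ‖mixedD q b G x (v x)‖ := by
        rw [FaaAux2.mixedD_eq hGs, norm_mul, norm_pow, norm_neg, Complex.norm_I, one_pow, one_mul]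
      have hmix' : ‖mixedD q b G x (v x)‖
          ≤ C * γ (v x) * jb x ^ (-(((j : ℝ) - ((q + b) / 2 : ℕ)) / ((p : ℝ) - 1))) :=
        hmix q b hq1 hfloor t ht x (v x)
      have hexp : jb x ^ (-(((j : ℝ) - ((q + b) / 2 : ℕ)) / ((p : ℝ) - 1)))
          ≤ jb x ^ (-(((j : ℝ) - (β / 2 : ℕ)) / ((p : ℝ) - 1))) := by
        apply Real.rpow_le_rpow_of_exponent_le hjb1
        have hcast : (((q + b) / 2 : ℕ) : ℝ) ≤ ((β / 2 : ℕ) : ℝ) := by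
          exact_mod_cast Nat.div_le_div_right hqb
        have h1 : (j : ℝ) - ((β / 2 : ℕ) : ℝ) ≤ (j : ℝ) - (((q + b) / 2 : ℕ) : ℝ) := by linarith
        have h2 : ((j : ℝ) - ((β / 2 : ℕ) : ℝ)) / ((p:ℝ) - 1)
            ≤ ((j : ℝ) - (((q + b) / 2 : ℕ) : ℝ)) / ((p:ℝ) - 1) := by
          exact div_le_div_of_nonneg_right h1 hp1.le |>.trans_eq rfl
        linarith
      -- bound on P
      have hrs_le : rs.length ≤ β := by omega
      set M : ℝ := 1 + Real.sqrt 2 * S with hM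
      have hM1 : (1:ℝ) ≤ M := by nlinarith
      have hM0 : (0:ℝ) ≤ M := by linarith
      have hPle : ‖FaaAux3.P v rs x‖ ≤ M ^ rs.length := by
        apply SobAux.P_norm_le v rs x M hM0
        intro r hr
        have hrβ : r ≤ β := by
          have := List.single_le_sum (fun z (_ : z ∈ rs) => Nat.zero_le z) r hr
          omega
        have := SobAux.deriv_sup_bound hvs hmem hrβ x
        rw [hM]
        linarith
      have hPle2 : ‖FaaAux3.P v rs x‖ ≤ D * (1 + S ^ β) := by
        calc ‖FaaAux3.P v rs x‖ ≤ M ^ rs.length := hPle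
          _ ≤ M ^ β := pow_le_pow_right₀ hM1 hrs_le
          _ ≤ D * (1 + S ^ β) := by rw [hM, hD]; exact FinAux.pow_bound S hS0 β
      calc |((-Complex.I)^β * FaaAux3.Tm G v (q, b, rs) x).im|
          ≤ ‖(-Complex.I)^β * FaaAux3.Tm G v (q, b, rs) x‖ := him
        _ = ‖FaaAux.A q b G x (v x)‖ * ‖FaaAux3.P v rs x‖ := hTmnorm
        _ ≤ (C * γ (v x) * jb x ^ (-(((j : ℝ) - (β / 2 : ℕ)) / ((p : ℝ) - 1)))) * (D * (1 + S ^ β)) := by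
            apply mul_le_mul ?_ hPle2 (norm_nonneg _) (by positivity)
            rw [hAnorm]
            exact hmix'.trans (by
              apply mul_le_mul_of_nonneg_left hexp (by positivity))
  -- assemble
  have hL' : iteratedDeriv β (fun x' => a t x' (v x')) x
      = (L.map (fun τ => FaaAux3.Tm G v τ x)).sum := hL G v hGs hvs x
  have hDxg : DxIter β (fun x' => a t x' (v x')) x
      = ((L.map (fun τ => (-Complex.I)^β * FaaAux3.Tm G v τ x)).sum) := by
    rw [FaaAux2.DxIter_eq hg β x]
    rw [hL']
    rw [List.sum_map_mul_left]
  rw [hDxg]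
  have hsum_le := SobAux.im_sum_le L (fun τ => (-Complex.I)^β * FaaAux3.Tm G v τ x)
    (C * γ (v x) * jb x ^ (-(((j : ℝ) - (β / 2 : ℕ)) / ((p : ℝ) - 1))) * (D * (1 + S ^ β)))
    (by positivity) hterm
  calc |((L.map (fun τ => (-Complex.I)^β * FaaAux3.Tm G v τ x)).sum).im|
      ≤ (L.length : ℝ) * (C * γ (v x) * jb x ^ (-(((j : ℝ) - (β / 2 : ℕ)) / ((p : ℝ) - 1))) * (D * (1 + S ^ β))) := hsum_le
    _ = ((L.length : ℝ) * (C * D)) * (γ (v x) * jb x ^ (-(((j : ℝ) - (β / 2 : ℕ)) / ((p : ℝ) - 1))) * (1 + S ^ β)) := by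
        ring
    _ ≤ ((L.length : ℝ) * (C * D) + 1) * (γ (v x) * jb x ^ (-(((j : ℝ) - (β / 2 : ℕ)) / ((p : ℝ) - 1))) * (1 + S ^ β)) := by
        apply mul_le_mul_of_nonneg_right (by linarith) (by positivity)
    _ = ((L.length : ℝ) * (C * D) + 1) * γ (v x) * jb x ^ (-(((j : ℝ) - (β / 2 : ℕ)) / ((p : ℝ) - 1))) * (1 + S ^ β) := by
        ring
end
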